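/- arXiv:math/0701631 — 11 statements merged into one kernel-verified Lean document; each statement's English description precedes it below -/
import Mathlib

section
/- If R is an integral domain and I is a nonzero ideal of R, then the ring R⋈I is reduced and has exactly two minimal prime ideals, namely O₁ = {(0,i) : i ∈ I} and O₂ = {(i,0) : i ∈ I}. -/
/-- The amalgamated duplication of a commutative ring `R` along an ideal `I`,
realized as the subring `{(a, b) : R × R | b - a ∈ I}` of the product ring `R × R`
(equivalently, `{(r, r + i) | r ∈ R, i ∈ I}`). -/
def amalg (R : Type*) [CommRing R] (I : Ideal R) : Subring (R × R) where
  carrier := {p | p.2 - p.1 ∈ I}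
  zero_mem' := by simp
  one_mem' := by simp
  add_mem' := by
    intro a b ha hb
    show (a + b).2 - (a + b).1 ∈ I
    have h : (a + b).2 - (a + b).1 = (a.2 - a.1) + (b.2 - b.1) := by
      simp only [Prod.fst_add, Prod.snd_add]; ring
    rw [h]; exact I.add_mem ha hb
  neg_mem' := by
    intro a ha
    show (-a).2 - (-a).1 ∈ I
    have h : (-a).2 - (-a).1 = -(a.2 - a.1) := by
      simp only [Prod.fst_neg, Prod.snd_neg]; ring
    rw [h]; exact I.neg_mem ha
  mul_mem' := by
    intro a b ha hb
    show (a * b).2 - (a * b).1 ∈ I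
    have h : (a * b).2 - (a * b).1 = a.2 * (b.2 - b.1) + b.1 * (a.2 - a.1) := by
      simp only [Prod.fst_mul, Prod.snd_mul]; ring
    rw [h]; exact I.add_mem (I.mul_mem_left _ hb) (I.mul_mem_left _ ha)

/-- The set of zero-divisors of a commutative ring `S`:
elements `x` such that `x * y = 0` for some `y ≠ 0`. -/
def zdSet (S : Type*) [CommRing S] : Set S := {x | ∃ y, y ≠ 0 ∧ x * y = 0}

/-- The zero-divisor graph `Γ(S)` of a commutative ring `S`: the vertices are the nonzero
zero-divisors of `S`, and distinct vertices `x`, `y` are adjacent iff `x * y = 0`. -/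
def zdGraph (S : Type*) [CommRing S] : SimpleGraph {x : S // x ≠ 0 ∧ x ∈ zdSet S} where
  Adj a b := a ≠ b ∧ (a : S) * (b : S) = 0
  symm := by
    constructor
    rintro a b ⟨h1, h2⟩
    exact ⟨h1.symm, by rwa [mul_comm]⟩
  loopless := by constructor; rintro a ⟨h, -⟩; exact h rfl

/-- if `R` is a domain and `I ≠ 0`, then `R ⋈ I` is reduced and has exactly two
minimal primes, `O₁ = {(0, i) : i ∈ I}` and `O₂ = {(i, 0) : i ∈ I}`. -/
theorem stmt1 (R : Type*) [CommRing R] [IsDomain R] (I : Ideal R) (hI : I ≠ ⊥) :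
    IsReduced ↥(amalg R I) ∧
    ∃ O₁ O₂ : Ideal ↥(amalg R I), O₁ ≠ O₂ ∧
      minimalPrimes ↥(amalg R I) = {O₁, O₂} ∧
      (∀ p : ↥(amalg R I), p ∈ O₁ ↔ (p : R × R).1 = 0) ∧
      (∀ p : ↥(amalg R I), p ∈ O₂ ↔ (p : R × R).2 = 0) := by
  -- coordinates of elements of amalg
  obtain ⟨i, hiI, hi0⟩ := Submodule.exists_mem_ne_zero_of_ne_bot hI
  let f₁ : ↥(amalg R I) →+* R := (RingHom.fst R R).comp (amalg R I).subtype
  let f₂ : ↥(amalg R I) →+* R := (RingHom.snd R R).comp (amalg R I).subtype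
  let O₁ := RingHom.ker f₁
  let O₂ := RingHom.ker f₂
  have mem₁ : ∀ p : ↥(amalg R I), p ∈ O₁ ↔ (p : R × R).1 = 0 := fun p => Iff.rfl
  have mem₂ : ∀ p : ↥(amalg R I), p ∈ O₂ ↔ (p : R × R).2 = 0 := fun p => Iff.rfl
  haveI hp₁ : O₁.IsPrime := RingHom.ker_isPrime f₁
  haveI hp₂ : O₂.IsPrime := RingHom.ker_isPrime f₂
  -- witnesses
  have hmem : ((i, 0) : R × R) ∈ amalg R I := by
    show (0 : R) - i ∈ I; simpa using I.neg_mem hiI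
  have hmem' : ((0, i) : R × R) ∈ amalg R I := by
    show i - (0 : R) ∈ I; simpa using hiI
  set e : ↥(amalg R I) := ⟨(i, 0), hmem⟩ with he
  set e' : ↥(amalg R I) := ⟨(0, i), hmem'⟩ with he'
  have heO₂ : e ∈ O₂ := by rw [mem₂]
  have heO₁ : e ∉ O₁ := by rw [mem₁]; exact hi0
  have he'O₁ : e' ∈ O₁ := by rw [mem₁]
  have he'O₂ : e' ∉ O₂ := by rw [mem₂]; exact hi0
  have hne : O₁ ≠ O₂ := fun h => heO₁ (h ▸ heO₂)
  -- product bottom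
  have hmul : O₁ * O₂ = ⊥ := by
    refine le_antisymm (Ideal.mul_le.2 fun x hx y hy => ?_) bot_le
    rw [Ideal.mem_bot]
    apply Subtype.ext
    apply Prod.ext
    · show ((x : R × R).1 * (y : R × R).1 = 0)
      rw [(mem₁ x).1 hx, zero_mul]
    · show ((x : R × R).2 * (y : R × R).2 = 0)
      rw [(mem₂ y).1 hy, mul_zero]
  have key : ∀ P : Ideal ↥(amalg R I), P.IsPrime → O₁ ≤ P ∨ O₂ ≤ P := by
    intro P hP
    exact (Ideal.IsPrime.mul_le hP).1 (hmul ▸ bot_le)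
  constructor
  · -- reduced
    constructor
    intro x hx
    obtain ⟨n, hn⟩ := hx
    have h1 : IsNilpotent ((x : R × R).1) := ⟨n, by
      have := congrArg (fun z : ↥(amalg R I) => ((z : R × R)).1) hn
      simpa using this⟩
    have h2 : IsNilpotent ((x : R × R).2) := ⟨n, by
      have := congrArg (fun z : ↥(amalg R I) => ((z : R × R)).2) hn
      simpa using this⟩
    exact Subtype.ext (Prod.ext (h1.eq_zero) (h2.eq_zero))
  · refine ⟨O₁, O₂, hne, ?_, mem₁, mem₂⟩
    have hO₁min : O₁ ∈ minimalPrimes ↥(amalg R I) := by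
      refine ⟨⟨hp₁, bot_le⟩, fun Q hQ hQle => ?_⟩
      rcases key Q hQ.1 with h | h
      · exact h
      · exact absurd (hQle (h heO₂)) heO₁
    have hO₂min : O₂ ∈ minimalPrimes ↥(amalg R I) := by
      refine ⟨⟨hp₂, bot_le⟩, fun Q hQ hQle => ?_⟩
      rcases key Q hQ.1 with h | h
      · exact absurd (hQle (h he'O₁)) he'O₂
      · exact h
    ext P
    simp only [Set.mem_insert_iff, Set.mem_singleton_iff]
    constructor
    · intro hP
      rcases key P hP.1.1 with h | h
      · exact Or.inl (le_antisymm (hP.2 ⟨hp₁, bot_le⟩ h) h)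
      · exact Or.inr (le_antisymm (hP.2 ⟨hp₂, bot_le⟩ h) h)
    · rintro (rfl | rfl)
      · exact hO₁min
      · exact hO₂min
end

section
/- The set of zero-divisors of R⋈I is exactly Z(R⋈I) = {(0,i) : i ∈ I} ∪ {(i,0) : i ∈ I} ∪ {(x, x+i) : x ∈ Z(R)\{0}, i ∈ I} ∪ {(x, x+i) : x ∈ R\Z(R), i ∈ I, and there exists j ∈ I with j ≠ 0 and j(x+i) = 0}. -/
/-- description of the set of zero-divisors of `R ⋈ I`. -/
theorem stmt3 (R : Type*) [CommRing R] [Nontrivial R] (I : Ideal R) :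
    zdSet ↥(amalg R I) =
      {p : ↥(amalg R I) | (p : R × R).1 = 0} ∪
      {p : ↥(amalg R I) | (p : R × R).2 = 0} ∪
      {p : ↥(amalg R I) | (p : R × R).1 ≠ 0 ∧ (p : R × R).1 ∈ zdSet R} ∪
      {p : ↥(amalg R I) | (p : R × R).1 ∉ zdSet R ∧
        ∃ j ∈ I, j ≠ 0 ∧ j * (p : R × R).2 = 0} := by
  ext p
  obtain ⟨⟨a, b⟩, hp⟩ := p
  have hI : b - a ∈ I := hp
  simp only [Set.mem_union, Set.mem_setOf_eq, zdSet]
  constructor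
  · rintro ⟨⟨⟨c, d⟩, hq⟩, hq0, hpq⟩
    have hcoords : a * c = 0 ∧ b * d = 0 := by
      have := congrArg Subtype.val hpq
      simpa [Prod.ext_iff] using this
    obtain ⟨hac, hbd⟩ := hcoords
    have hcd : ¬(c = 0 ∧ d = 0) := by
      rintro ⟨hc, hd⟩
      exact hq0 (Subtype.ext (by simp [hc, hd]))
    by_cases ha : a = 0
    · exact Or.inl (Or.inl (Or.inl ha))
    by_cases hb : b = 0
    · exact Or.inl (Or.inl (Or.inr hb))
    by_cases haz : a ∈ zdSet R
    · exact Or.inl (Or.inr ⟨ha, haz⟩)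
    · have hc : c = 0 := by
        by_contra hc
        exact haz ⟨c, hc, hac⟩
      refine Or.inr ⟨haz, d, ?_, ?_, by rw [mul_comm]; exact hbd⟩
      · have h2 : d - c ∈ I := hq
        simpa [hc] using h2
      · intro hd
        exact hcd ⟨hc, hd⟩
  · have prodeq : ∀ (c d : R) (h : d - c ∈ I), a * c = 0 → b * d = 0 →
        (⟨(a, b), hp⟩ : ↥(amalg R I)) * ⟨(c, d), h⟩ = 0 := by
      intro c d h hac hbd
      exact Subtype.ext (Prod.ext hac hbd)
    have nz : ∀ (c d : R) (h : d - c ∈ I), ¬(c = 0 ∧ d = 0) →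
        (⟨(c, d), h⟩ : ↥(amalg R I)) ≠ 0 := by
      intro c d h hcd heq
      have := congrArg Subtype.val heq
      rw [Prod.ext_iff] at this
      exact hcd ⟨this.1, this.2⟩
    have honeNe : (1 : ↥(amalg R I)) ≠ 0 := by
      intro h
      have := congrArg Subtype.val h
      rw [Prod.ext_iff] at this
      exact one_ne_zero this.1
    rintro (((ha | hb) | ⟨ha, r, hr, har⟩) | ⟨-, j, hjI, hj0, hjb⟩)
    · -- a = 0
      by_cases hb : b = 0
      · refine ⟨1, honeNe, ?_⟩
        refine Subtype.ext (Prod.ext ?_ ?_) <;> simp [ha, hb]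
      · have hbI : b ∈ I := by rw [ha] at hI; simpa using hI
        exact ⟨⟨(b, 0), show (0:R) - b ∈ I by simpa using I.neg_mem hbI⟩,
          nz _ _ _ (fun h => hb h.1),
          prodeq _ _ _ (by rw [ha, zero_mul]) (mul_zero b)⟩
    · -- b = 0
      by_cases ha : a = 0
      · refine ⟨1, honeNe, ?_⟩
        refine Subtype.ext (Prod.ext ?_ ?_) <;> simp [ha, hb]
      · have haI : a ∈ I := by
          have := I.neg_mem hI
          rw [hb] at this
          simpa using this
        exact ⟨⟨(0, a), show a - 0 ∈ I by simpa using haI⟩, nz _ _ _ (fun h => ha h.2),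
          prodeq _ _ _ (mul_zero a) (by rw [hb, zero_mul])⟩
    · -- a ≠ 0, a ∈ Z(R): a * r = 0, r ≠ 0
      by_cases hbr : b * r = 0
      · exact ⟨⟨(r, r), show r - r ∈ I by simp⟩, nz _ _ _ (fun h => hr h.1),
          prodeq _ _ _ har hbr⟩
      · have hrbI : r * b ∈ I := by
          have h1 : r * (b - a) ∈ I := I.mul_mem_left r hI
          have h2 : r * b = r * (b - a) := by
            rw [mul_sub]
            rw [mul_comm r a, har]
            ring
          rw [h2]; exact h1
        refine ⟨⟨(r * b, 0), show (0:R) - r * b ∈ I by simpa using I.neg_mem hrbI⟩,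
          nz _ _ _ (fun h => hbr (by rw [mul_comm]; exact h.1)),
          prodeq _ _ _ (by rw [← mul_assoc, har, zero_mul]) (mul_zero b)⟩
    · -- fourth case
      exact ⟨⟨(0, j), show j - 0 ∈ I by simpa using hjI⟩, nz _ _ _ (fun h => hj0 h.2),
        prodeq _ _ _ (mul_zero a) (by rw [mul_comm]; exact hjb)⟩
end

section
/- If R is an integral domain and the ideal I has at least 3 elements, then the girth of the zero-divisor graph Γ(R⋈I) equals 4. -/
section Aux

set_option linter.unusedSectionVars false
variable {R : Type*} [CommRing R] [IsDomain R] {I : Ideal R}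

lemma mem_amalg {p : R × R} : p ∈ amalg R I ↔ p.2 - p.1 ∈ I := Iff.rfl

lemma amalg_ext {x y : ↥(amalg R I)} (h1 : (x : R × R).1 = (y : R × R).1)
    (h2 : (x : R × R).2 = (y : R × R).2) : x = y := by
  ext <;> assumption

lemma amalg_ne_zero_iff {x : ↥(amalg R I)} :
    x ≠ 0 ↔ ((x : R × R).1 ≠ 0 ∨ (x : R × R).2 ≠ 0) := by
  constructor
  · intro h
    by_contra hc
    push_neg at hc
    exact h (amalg_ext hc.1 hc.2)
  · rintro (h | h) rfl <;> simp at h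

lemma vert_coord_zero (v : {x : ↥(amalg R I) // x ≠ 0 ∧ x ∈ zdSet ↥(amalg R I)}) : ((v : ↥(amalg R I)) : R × R).1 = 0 ∨
    ((v : ↥(amalg R I)) : R × R).2 = 0 := by
  obtain ⟨y, hy0, hmul⟩ := v.2.2
  by_contra hc
  push_neg at hc
  have h1 : ((v : ↥(amalg R I)) : R × R).1 * (y : R × R).1 = 0 := by
    have := congrArg (fun z : ↥(amalg R I) => ((z : R × R)).1) hmul
    simpa using this
  have h2 : ((v : ↥(amalg R I)) : R × R).2 * (y : R × R).2 = 0 := by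
    have := congrArg (fun z : ↥(amalg R I) => ((z : R × R)).2) hmul
    simpa using this
  have hy1 : (y : R × R).1 = 0 := by
    rcases mul_eq_zero.mp h1 with h | h
    · exact absurd h hc.1
    · exact h
  have hy2 : (y : R × R).2 = 0 := by
    rcases mul_eq_zero.mp h2 with h | h
    · exact absurd h hc.2
    · exact h
  exact hy0 (amalg_ext (by simpa using hy1) (by simpa using hy2))

lemma adj_opp {u v : {x : ↥(amalg R I) // x ≠ 0 ∧ x ∈ zdSet ↥(amalg R I)}} (h : (zdGraph ↥(amalg R I)).Adj u v) :
    (((u : ↥(amalg R I)) : R × R).1 = 0 ↔ ((v : ↥(amalg R I)) : R × R).1 ≠ 0) := by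
  obtain ⟨-, hmul⟩ := h
  have h1 : ((u : ↥(amalg R I)) : R × R).1 * ((v : ↥(amalg R I)) : R × R).1 = 0 := by
    have := congrArg (fun z : ↥(amalg R I) => ((z : R × R)).1) hmul
    simpa using this
  have h2 : ((u : ↥(amalg R I)) : R × R).2 * ((v : ↥(amalg R I)) : R × R).2 = 0 := by
    have := congrArg (fun z : ↥(amalg R I) => ((z : R × R)).2) hmul
    simpa using this
  constructor
  · intro hu1 hv1
    -- u.1 = 0 so u.2 ≠ 0 (u nonzero); v.1 = 0 so v.2 ≠ 0; but u.2 * v.2 = 0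
    have hu2 : ((u : ↥(amalg R I)) : R × R).2 ≠ 0 := by
      rcases amalg_ne_zero_iff.mp u.2.1 with h | h
      · exact absurd hu1 h
      · exact h
    have hv2 : ((v : ↥(amalg R I)) : R × R).2 ≠ 0 := by
      rcases amalg_ne_zero_iff.mp v.2.1 with h | h
      · exact absurd hv1 h
      · exact h
    rcases mul_eq_zero.mp h2 with h | h
    · exact hu2 h
    · exact hv2 h
  · intro hv1
    rcases mul_eq_zero.mp h1 with h | h
    · exact h
    · exact absurd h hv1

/-- the vertex `(i, 0)` for `i ∈ I`, `i ≠ 0`. -/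
noncomputable def vA (i : R) (hi : i ∈ I) (hne : i ≠ 0) : {x : ↥(amalg R I) // x ≠ 0 ∧ x ∈ zdSet ↥(amalg R I)} := by
  refine ⟨⟨(i, 0), mem_amalg.mpr (by simpa using I.neg_mem hi)⟩, ?_, ?_⟩
  · intro h
    have := congrArg (fun z : ↥(amalg R I) => ((z : R × R)).1) h
    simp at this
    exact hne this
  · exact ⟨⟨(0, i), mem_amalg.mpr (by simpa using hi)⟩, by
      intro h
      have := congrArg (fun z : ↥(amalg R I) => ((z : R × R)).2) h
      simp at this
      exact hne this, by
      apply Subtype.ext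
      simp [Prod.ext_iff]⟩

/-- the vertex `(0, i)` for `i ∈ I`, `i ≠ 0`. -/
noncomputable def vB (i : R) (hi : i ∈ I) (hne : i ≠ 0) : {x : ↥(amalg R I) // x ≠ 0 ∧ x ∈ zdSet ↥(amalg R I)} := by
  refine ⟨⟨(0, i), mem_amalg.mpr (by simpa using hi)⟩, ?_, ?_⟩
  · intro h
    have := congrArg (fun z : ↥(amalg R I) => ((z : R × R)).2) h
    simp at this
    exact hne this
  · exact ⟨⟨(i, 0), mem_amalg.mpr (by simpa using I.neg_mem hi)⟩, by
      intro h
      have := congrArg (fun z : ↥(amalg R I) => ((z : R × R)).1) h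
      simp at this
      exact hne this, by
      apply Subtype.ext
      simp [Prod.ext_iff]⟩

lemma vA_coe (i : R) (hi : i ∈ I) (hne : i ≠ 0) :
    (((vA i hi hne : ↥(amalg R I))) : R × R) = (i, 0) := rfl

lemma vB_coe (i : R) (hi : i ∈ I) (hne : i ≠ 0) :
    (((vB i hi hne : ↥(amalg R I))) : R × R) = (0, i) := rfl

lemma vA_ne_vB (i j : R) (hi : i ∈ I) (hj : j ∈ I) (hne : i ≠ 0) (hne' : j ≠ 0) :
    vA i hi hne ≠ vB j hj hne' := by
  intro h
  have := congrArg (fun v : {x : ↥(amalg R I) // x ≠ 0 ∧ x ∈ zdSet ↥(amalg R I)} =>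
    (((v : ↥(amalg R I)) : R × R)).1) h
  simp [vA_coe, vB_coe] at this
  exact hne this

lemma vA_adj_vB (i j : R) (hi : i ∈ I) (hj : j ∈ I) (hne : i ≠ 0) (hne' : j ≠ 0) :
    (zdGraph ↥(amalg R I)).Adj (vA i hi hne) (vB j hj hne') := by
  refine ⟨vA_ne_vB i j hi hj hne hne', ?_⟩
  apply Subtype.ext
  simp [vA, vB, Prod.ext_iff]

lemma vA_inj {i j : R} {hi : i ∈ I} {hj : j ∈ I} {hne : i ≠ 0} {hne' : j ≠ 0}
    (h : vA i hi hne = vA j hj hne') : i = j := by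
  have := congrArg (fun v : {x : ↥(amalg R I) // x ≠ 0 ∧ x ∈ zdSet ↥(amalg R I)} =>
    (((v : ↥(amalg R I)) : R × R)).1) h
  simpa [vA_coe] using this

lemma vB_inj {i j : R} {hi : i ∈ I} {hj : j ∈ I} {hne : i ≠ 0} {hne' : j ≠ 0}
    (h : vB i hi hne = vB j hj hne') : i = j := by
  have := congrArg (fun v : {x : ↥(amalg R I) // x ≠ 0 ∧ x ∈ zdSet ↥(amalg R I)} =>
    (((v : ↥(amalg R I)) : R × R)).2) h
  simpa [vB_coe] using this

end Aux

/-- if `R` is a domain and `I` has at least `3` elements,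
then `girth Γ(R ⋈ I) = 4`. -/
theorem stmt6 (R : Type*) [CommRing R] [IsDomain R] (I : Ideal R)
    (h3 : ∃ a b c : ↥I, a ≠ b ∧ a ≠ c ∧ b ≠ c) :
    (zdGraph ↥(amalg R I)).egirth = 4 := by
  -- extract two distinct nonzero elements of I
  obtain ⟨a, b, c, hab, hac, hbc⟩ := h3
  obtain ⟨i, j, hiI, hjI, hi0, hj0, hij⟩ :
      ∃ i j : R, i ∈ I ∧ j ∈ I ∧ i ≠ 0 ∧ j ≠ 0 ∧ i ≠ j := by
    by_cases ha : (a : R) = 0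
    · refine ⟨b, c, b.2, c.2, ?_, ?_, ?_⟩
      · intro h; exact hab (Subtype.ext (ha.trans h.symm))
      · intro h; exact hac (Subtype.ext (ha.trans h.symm))
      · intro h; exact hbc (Subtype.ext h)
    · by_cases hb : (b : R) = 0
      · refine ⟨a, c, a.2, c.2, ha, ?_, ?_⟩
        · intro h; exact hbc (Subtype.ext (hb.trans h.symm))
        · intro h; exact hac (Subtype.ext h)
      · refine ⟨a, b, a.2, b.2, ha, hb, fun h => hab (Subtype.ext h)⟩
  -- the 4-cycle
  set x1 := vA (I := I) i hiI hi0 with hx1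
  set x2 := vB (I := I) i hiI hi0 with hx2
  set x3 := vA (I := I) j hjI hj0 with hx3
  set x4 := vB (I := I) j hjI hj0 with hx4
  have a12 : (zdGraph ↥(amalg R I)).Adj x1 x2 := vA_adj_vB i i hiI hiI hi0 hi0
  have a23 : (zdGraph ↥(amalg R I)).Adj x2 x3 := ((vA_adj_vB j i hjI hiI hj0 hi0).symm)
  have a34 : (zdGraph ↥(amalg R I)).Adj x3 x4 := vA_adj_vB j j hjI hjI hj0 hj0
  have a41 : (zdGraph ↥(amalg R I)).Adj x4 x1 := ((vA_adj_vB i j hiI hjI hi0 hj0).symm)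
  have h13 : x1 ≠ x3 := fun h => hij (vA_inj h)
  have h24 : x2 ≠ x4 := fun h => hij (vB_inj h)
  have h12 : x1 ≠ x2 := a12.1
  have h23 : x2 ≠ x3 := a23.1
  have h34 : x3 ≠ x4 := a34.1
  have h14 : x1 ≠ x4 := (a41.1).symm
  let w : (zdGraph ↥(amalg R I)).Walk x1 x1 :=
    .cons a12 (.cons a23 (.cons a34 (.cons a41 .nil)))
  have hwlen : w.length = 4 := rfl
  have hwcyc : w.IsCycle := by
    constructor
    · constructor
      · -- IsTrail : edges nodup
        simp only [SimpleGraph.Walk.isTrail_def, w, SimpleGraph.Walk.edges_cons,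
          SimpleGraph.Walk.edges_nil]
        simp [List.nodup_cons, Sym2.eq, Sym2.rel_iff', Prod.ext_iff]
        refine ⟨⟨?_, ?_, ?_⟩, ⟨?_, ?_⟩, ?_⟩ <;> tauto
      · simp [w]
    · -- support tail nodup
      simp [w, List.nodup_cons]
      refine ⟨⟨?_, ?_, ?_⟩, ⟨?_, ?_⟩, ?_⟩ <;> tauto
  apply le_antisymm
  · calc (zdGraph ↥(amalg R I)).egirth ≤ w.length := by
          rw [SimpleGraph.egirth]
          exact iInf₂_le_of_le x1 w (iInf_le _ hwcyc)
        _ = 4 := by rw [hwlen]; rfl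
  · rw [SimpleGraph.le_egirth]
    intro v p hp
    have h3le : 3 ≤ p.length := hp.three_le_length
    have hne3 : p.length ≠ 3 := by
      intro hlen
      -- extract a triangle
      have e01 : (zdGraph ↥(amalg R I)).Adj (p.getVert 0) (p.getVert 1) :=
        p.adj_getVert_succ (by omega)
      have e12 : (zdGraph ↥(amalg R I)).Adj (p.getVert 1) (p.getVert 2) :=
        p.adj_getVert_succ (by omega)
      have e23 : (zdGraph ↥(amalg R I)).Adj (p.getVert 2) (p.getVert 3) :=
        p.adj_getVert_succ (by omega)
      have hv0 : p.getVert 0 = v := p.getVert_zero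
      have hv3 : p.getVert 3 = v := by
        have := p.getVert_length
        rwa [hlen] at this
      rw [hv3] at e23
      rw [hv0] at e01
      have o1 := adj_opp e01
      have o2 := adj_opp e12
      have o3 := adj_opp e23
      tauto
    have : 4 ≤ p.length := by omega
    exact_mod_cast this
end

section
/- If R is an integral domain and the ideal I has exactly 2 elements, then I = R, the ring R has exactly two elements (so R is isomorphic to ℤ₂), and the girth of the zero-divisor graph Γ(R⋈I) is ∞. -/
/-- if `R` is a domain and `I` has exactly two elements, then `I = R`,
`R` has exactly two elements (so `R ≅ ℤ₂`), and `girth Γ(R ⋈ I) = ∞`. -/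
theorem stmt7 (R : Type*) [CommRing R] [IsDomain R] (I : Ideal R)
    (h2 : Nat.card ↥I = 2) :
    I = ⊤ ∧ Nat.card R = 2 ∧ (zdGraph ↥(amalg R I)).egirth = ⊤ := by
  classical
  -- Step 1: I = ⊤
  obtain ⟨x, y, hxy, huniv⟩ := Nat.card_eq_two_iff.mp h2
  have key : ∀ z : ↥I, z = x ∨ z = y := by
    intro z
    have : z ∈ ({x, y} : Set ↥I) := huniv ▸ Set.mem_univ z
    simpa using this
  obtain ⟨i, hiI, hi0, hall⟩ : ∃ i ∈ I, i ≠ 0 ∧ ∀ z ∈ I, z = 0 ∨ z = i := by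
    rcases key ⟨0, I.zero_mem⟩ with h0 | h0
    · refine ⟨(y : R), y.2, ?_, ?_⟩
      · intro h; apply hxy; rw [← h0]; exact (Subtype.ext h.symm)
      · intro z hz; rcases key ⟨z, hz⟩ with h | h
        · left; exact congrArg Subtype.val (h.trans h0.symm)
        · right; exact congrArg Subtype.val h
    · refine ⟨(x : R), x.2, ?_, ?_⟩
      · intro h; apply hxy; rw [← h0]; exact (Subtype.ext h)
      · intro z hz; rcases key ⟨z, hz⟩ with h | h
        · right; exact congrArg Subtype.val h
        · left; exact congrArg Subtype.val (h.trans h0.symm)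
  have hsq : i * i ∈ I := I.mul_mem_left i hiI
  have hItop : I = ⊤ := by
    rcases hall _ hsq with h | h
    · exact absurd (mul_eq_zero.mp h) (by simp [hi0])
    · have hi1 : i = 1 := mul_left_cancel₀ hi0 (h.trans (mul_one i).symm)
      rw [Ideal.eq_top_iff_one, ← hi1]; exact hiI
  -- Step 2: Nat.card R = 2
  have hcardR : Nat.card R = 2 := by
    rw [← h2, hItop]
    exact (Nat.card_congr Submodule.topEquiv.toEquiv).symm
  -- every element of R is 0 or 1
  have h01 : ∀ r : R, r = 0 ∨ r = 1 := by
    obtain ⟨a, b, hab, hu⟩ := Nat.card_eq_two_iff.mp hcardR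
    intro r
    have hm : ∀ s : R, s = a ∨ s = b := by
      intro s
      have : s ∈ ({a, b} : Set R) := hu ▸ Set.mem_univ s
      simpa using this
    have h0 := hm 0
    have h1 := hm 1
    have hne : (0 : R) ≠ 1 := zero_ne_one
    rcases hm r with h | h <;> rcases h0 with h0 | h0 <;> rcases h1 with h1 | h1 <;>
      simp_all
  refine ⟨hItop, hcardR, ?_⟩
  -- Step 3: acyclicity
  set S := ↥(amalg R I)
  have hv : ∀ v : {x : S // x ≠ 0 ∧ x ∈ zdSet S},
      ((v : S) : R × R) = ((0 : R), (1 : R)) ∨ ((v : S) : R × R) = ((1 : R), (0 : R)) := by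
    rintro ⟨⟨⟨p, q⟩, hpq⟩, hne, hzd⟩
    rcases h01 p with hp | hp <;> rcases h01 q with hq | hq <;> subst hp <;> subst hq
    · exact absurd (Subtype.ext rfl) hne
    · left; rfl
    · right; rfl
    · exfalso
      obtain ⟨z, hz0, hz⟩ := hzd
      apply hz0
      have : ((1 : R), (1 : R)) = ((1 : S) : R × R) := rfl
      rw [show (⟨((1:R),(1:R)), hpq⟩ : S) = 1 from Subtype.ext rfl, one_mul] at hz
      exact hz
  have hfinj : Function.Injective
      (fun v : {x : S // x ≠ 0 ∧ x ∈ zdSet S} => ((v : S) : R × R).1) := by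
    intro v w h
    rcases hv v with h1 | h1 <;> rcases hv w with h2 | h2
    · exact Subtype.ext (Subtype.ext (h1.trans h2.symm))
    · exfalso; simp only [h1, h2] at h; exact zero_ne_one h
    · exfalso; simp only [h1, h2] at h; exact zero_ne_one h.symm
    · exact Subtype.ext (Subtype.ext (h1.trans h2.symm))
  rw [SimpleGraph.egirth_eq_top]
  intro v w hw
  have hfinR : Finite R := Nat.finite_of_card_ne_zero (by omega)
  have : Fintype R := Fintype.ofFinite R
  have hnd : (w.support.tail.map
      (fun v : {x : S // x ≠ 0 ∧ x ∈ zdSet S} => ((v : S) : R × R).1)).Nodup :=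
    hw.support_nodup.map hfinj
  have hle := hnd.length_le_card
  have hlen : w.support.tail.length = w.length := by
    have := w.length_support
    simp [List.length_tail, this]
  have h3 := hw.three_le_length
  rw [List.length_map, hlen] at hle
  rw [← Nat.card_eq_fintype_card, hcardR] at hle
  omega
end

section
/- Let I be a nonzero ideal of R. Then: (a) the girth of Γ(R⋈I) equals 3 if and only if R is not an integral domain; (b) the girth of Γ(R⋈I) equals 4 if and only if R is an integral domain and I has at least 3 elements; (c) the girth of Γ(R⋈I) is ∞ if and only if I = R and R has exactly two elements (i.e. R ≅ ℤ₂). -/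
section Helpers
variable {R : Type*} [CommRing R] {I : Ideal R}

lemma amalg_eq_zero_iff (u : ↥(amalg R I)) : u = 0 ↔ (u : R × R).1 = 0 ∧ (u : R × R).2 = 0 := by
  rw [← Subtype.coe_inj, Prod.ext_iff]; rfl

lemma amalg_mul_eq_zero_iff (u v : ↥(amalg R I)) :
    u * v = 0 ↔ (u : R × R).1 * (v : R × R).1 = 0 ∧ (u : R × R).2 * (v : R × R).2 = 0 := by
  rw [← Subtype.coe_inj, Prod.ext_iff]
  exact Iff.rfl

/-- construct an element of the amalg -/
def mk2 (r s : R) (h : s - r ∈ I) : ↥(amalg R I) := ⟨(r, s), h⟩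

lemma mk2_eq_zero_iff {r s : R} (h : s - r ∈ I) : mk2 r s h = 0 ↔ r = 0 ∧ s = 0 :=
  amalg_eq_zero_iff _

lemma mk2_eq_iff {r s r' s' : R} (h : s - r ∈ I) (h' : s' - r' ∈ I) :
    mk2 r s h = mk2 r' s' h' ↔ r = r' ∧ s = s' := by
  rw [← Subtype.coe_inj, Prod.ext_iff]; exact Iff.rfl

lemma mk2_mul_eq_zero_iff {r s r' s' : R} (h : s - r ∈ I) (h' : s' - r' ∈ I) :
    mk2 r s h * mk2 r' s' h' = 0 ↔ r * r' = 0 ∧ s * s' = 0 :=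
  amalg_mul_eq_zero_iff _ _

lemma amalg_triangle {i x y : R}
    (hiI : i ∈ I) (hi : i ≠ 0) (hx : x ≠ 0) (hy : y ≠ 0) (hxy : x * y = 0) :
    ∃ u v w : ↥(amalg R I), u ≠ 0 ∧ v ≠ 0 ∧ w ≠ 0 ∧ u ≠ v ∧ u ≠ w ∧ v ≠ w ∧
      u * v = 0 ∧ v * w = 0 ∧ w * u = 0 := by
  have key : ∀ (a b : R), a ∈ I → a ≠ 0 → b ≠ 0 → a * b = 0 →
      ∃ u v w : ↥(amalg R I), u ≠ 0 ∧ v ≠ 0 ∧ w ≠ 0 ∧ u ≠ v ∧ u ≠ w ∧ v ≠ w ∧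
      u * v = 0 ∧ v * w = 0 ∧ w * u = 0 := by
    -- triangle (a,0), (0,a), (b,b) where a ∈ I, a*b = 0
    intro a b haI ha hb hab
    have hma : (0 : R) - a ∈ I := by simpa using I.neg_mem haI
    have hpa : a - 0 ∈ I := by simpa using haI
    refine ⟨mk2 a 0 hma, mk2 0 a hpa, mk2 b b (by simp), ?_, ?_, ?_, ?_, ?_, ?_, ?_, ?_, ?_⟩
    · rw [Ne, mk2_eq_zero_iff]; tauto
    · rw [Ne, mk2_eq_zero_iff]; tauto
    · rw [Ne, mk2_eq_zero_iff]; tauto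
    · rw [Ne, mk2_eq_iff]; tauto
    · rw [Ne, mk2_eq_iff]; intro ⟨_, h2⟩; exact hb h2.symm
    · rw [Ne, mk2_eq_iff]; intro ⟨h1, _⟩; exact hb h1.symm
    · rw [mk2_mul_eq_zero_iff]; constructor <;> ring
    · rw [mk2_mul_eq_zero_iff]
      exact ⟨zero_mul b, hab⟩
    · rw [mk2_mul_eq_zero_iff]
      exact ⟨by rw [mul_comm]; exact hab, mul_zero b⟩
  by_cases hix : i * x = 0
  · exact key i x hiI hi hx hix
  · by_cases hiy : i * y = 0
    · exact key i y hiI hi hy hiy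
    · have hIix : i * x ∈ I := I.mul_mem_right x hiI
      have hIiy : i * y ∈ I := I.mul_mem_right y hiI
      have hkey : (i * x) * (i * y) = 0 := by
        calc (i * x) * (i * y) = (i * i) * (x * y) := by ring
        _ = 0 := by rw [hxy, mul_zero]
      by_cases heq : i * x = i * y
      · have hj2 : (i * x) * (i * x) = 0 := by nth_rewrite 2 [heq]; exact hkey
        exact key (i * x) (i * x) hIix hix hix hj2
      · -- triangle (ix,0), (iy,0), (0,i)
        refine ⟨mk2 (i*x) 0 (by simpa using I.neg_mem hIix),
          mk2 (i*y) 0 (by simpa using I.neg_mem hIiy),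
          mk2 0 i (by simpa using hiI), ?_, ?_, ?_, ?_, ?_, ?_, ?_, ?_, ?_⟩
        · rw [Ne, mk2_eq_zero_iff]; tauto
        · rw [Ne, mk2_eq_zero_iff]; tauto
        · rw [Ne, mk2_eq_zero_iff]; tauto
        · rw [Ne, mk2_eq_iff]; tauto
        · rw [Ne, mk2_eq_iff]; tauto
        · rw [Ne, mk2_eq_iff]; tauto
        · rw [mk2_mul_eq_zero_iff]; exact ⟨hkey, mul_zero 0⟩
        · rw [mk2_mul_eq_zero_iff]; exact ⟨mul_zero _, zero_mul i⟩
        · rw [mk2_mul_eq_zero_iff]; exact ⟨zero_mul _, mul_comm 0 i ▸ mul_zero i⟩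

lemma amalg_no_triangle [IsDomain R]
    {u v w : ↥(amalg R I)} (hu : u ≠ 0) (hv : v ≠ 0) (hw : w ≠ 0)
    (huv : u * v = 0) (hvw : v * w = 0) (hwu : w * u = 0) : False := by
  rw [amalg_mul_eq_zero_iff] at huv hvw hwu
  simp only [Ne, amalg_eq_zero_iff, not_and_or] at hu hv hw
  obtain ⟨h1, h2⟩ := huv; obtain ⟨h3, h4⟩ := hvw; obtain ⟨h5, h6⟩ := hwu
  by_cases hu1 : (u : R × R).1 = 0
  · have hu2 : (u : R × R).2 ≠ 0 := by tauto
    have hv2 : (v : R × R).2 = 0 := by rcases mul_eq_zero.mp h2 with h | h; exact absurd h hu2; exact h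
    have hw2 : (w : R × R).2 = 0 := by rcases mul_eq_zero.mp h6 with h | h; exact h; exact absurd h hu2
    have hv1 : (v : R × R).1 ≠ 0 := by tauto
    have hw1 : (w : R × R).1 ≠ 0 := by tauto
    rcases mul_eq_zero.mp h3 with h | h
    exacts [hv1 h, hw1 h]
  · have hv1 : (v : R × R).1 = 0 := by rcases mul_eq_zero.mp h1 with h | h; exact absurd h hu1; exact h
    have hw1 : (w : R × R).1 = 0 := by rcases mul_eq_zero.mp h5 with h | h; exact h; exact absurd h hu1
    have hv2 : (v : R × R).2 ≠ 0 := by tauto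
    have hw2 : (w : R × R).2 ≠ 0 := by tauto
    rcases mul_eq_zero.mp h4 with h | h
    exacts [hv2 h, hw2 h]

end Helpers

section Helpers2

open SimpleGraph

lemma egirth_le_of_cycle {V : Type*} {G : SimpleGraph V} {a : V} {w : G.Walk a a}
    (hw : w.IsCycle) : G.egirth ≤ w.length := by
  rw [SimpleGraph.egirth]
  exact (iInf_le _ a).trans ((iInf_le _ w).trans (iInf_le _ hw))

lemma cycle3_of_triangle {V : Type*} {G : SimpleGraph V} {u v w : V}
    (h1 : G.Adj u v) (h2 : G.Adj v w) (h3 : G.Adj w u) :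
    ∃ (c : G.Walk u u), c.IsCycle ∧ c.length = 3 := by
  refine ⟨.cons h1 (.cons h2 (.cons h3 .nil)), ?_, by simp⟩
  have nuv := h1.ne
  have nvw := h2.ne
  have nwu := h3.ne
  simp [Walk.isCycle_def, Walk.isTrail_def, Sym2.eq, Sym2.rel_iff', List.Nodup]
  aesop

lemma cycle4_of_square {V : Type*} {G : SimpleGraph V} {a b c d : V}
    (h1 : G.Adj a b) (h2 : G.Adj b c) (h3 : G.Adj c d) (h4 : G.Adj d a)
    (hac : a ≠ c) (hbd : b ≠ d) :
    ∃ (w : G.Walk a a), w.IsCycle ∧ w.length = 4 := by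
  refine ⟨.cons h1 (.cons h2 (.cons h3 (.cons h4 .nil))), ?_, by simp⟩
  have n1 := h1.ne
  have n2 := h2.ne
  have n3 := h3.ne
  have n4 := h4.ne
  simp [Walk.isCycle_def, Walk.isTrail_def, Sym2.eq, Sym2.rel_iff', List.Nodup]
  aesop

lemma triangle_of_cycle3 {V : Type*} {G : SimpleGraph V} {a : V} (w : G.Walk a a)
    (hl : w.length = 3) :
    ∃ u v x : V, G.Adj u v ∧ G.Adj v x ∧ G.Adj x u := by
  match w, hl with
  | .cons h1 (.cons h2 (.cons h3 .nil)), _ => exact ⟨_, _, _, h1, h2, h3⟩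

variable {R : Type*} [CommRing R]

lemma all01_of_card_two (h : Nat.card R = 2) : ∀ r : R, r = 0 ∨ r = 1 := by
  obtain ⟨x, y, hxy, huniv⟩ := Nat.card_eq_two_iff.mp h
  have hall : ∀ r : R, r = x ∨ r = y := fun r => by
    have : r ∈ ({x, y} : Set R) := huniv ▸ Set.mem_univ r
    simpa using this
  have h01 : (0 : R) ≠ 1 := by
    intro h01
    have h2 : ∀ r : R, r = 0 := fun r => by
      calc r = r * 1 := (mul_one r).symm
      _ = r * 0 := by rw [h01]
      _ = 0 := mul_zero r
    exact hxy ((h2 x).trans (h2 y).symm)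
  rcases hall 0 with h0 | h0
  · rcases hall 1 with h1 | h1
    · exact absurd (h0.trans h1.symm) h01
    · intro r
      rcases hall r with h | h
      · exact Or.inl (h.trans h0.symm)
      · exact Or.inr (h.trans h1.symm)
  · rcases hall 1 with h1 | h1
    · intro r
      rcases hall r with h | h
      · exact Or.inr (h.trans h1.symm)
      · exact Or.inl (h.trans h0.symm)
    · exact absurd (h0.trans h1.symm) h01

lemma domain_of_card_two [Nontrivial R] (h : Nat.card R = 2) : IsDomain R := by
  have hall := all01_of_card_two h
  have : NoZeroDivisors R := by
    constructor
    intro a b hab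
    by_contra hcon
    push_neg at hcon
    obtain ⟨ha, hb⟩ := hcon
    have ha1 : a = 1 := (hall a).resolve_left ha
    have hb1 : b = 1 := (hall b).resolve_left hb
    rw [ha1, hb1, mul_one] at hab
    exact one_ne_zero hab
  exact NoZeroDivisors.to_isDomain R

lemma card_two_of_all01 [Nontrivial R] (hall : ∀ r : R, r = 0 ∨ r = 1) : Nat.card R = 2 :=
  Nat.card_eq_two_iff.mpr ⟨0, 1, zero_ne_one, Set.eq_univ_of_univ_subset fun r _ => by
    rcases hall r with h | h <;> simp [h]⟩

lemma exists_zd_of_not_domain [Nontrivial R] (h : ¬ IsDomain R) :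
    ∃ x y : R, x ≠ 0 ∧ y ≠ 0 ∧ x * y = 0 := by
  by_contra hcon
  push_neg at hcon
  have : NoZeroDivisors R := by
    constructor
    intro a b hab
    by_contra hc
    push_neg at hc
    exact hcon a b hc.1 hc.2 hab
  exact h (NoZeroDivisors.to_isDomain R)

end Helpers2

section Helpers3

open SimpleGraph

variable {R : Type*} [CommRing R] {I : Ideal R}

lemma amalg_egirth_eq_three [Nontrivial R]
    (hI : I ≠ ⊥) (hd : ¬ IsDomain R) : (zdGraph ↥(amalg R I)).egirth = 3 := by
  obtain ⟨i, hiI, hi⟩ := (Submodule.ne_bot_iff I).mp hI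
  obtain ⟨x, y, hx, hy, hxy⟩ := exists_zd_of_not_domain hd
  obtain ⟨u, v, w, hu, hv, hw, huv, huw, hvw, muv, mvw, mwu⟩ := amalg_triangle hiI hi hx hy hxy
  have mvu : v * u = 0 := by rwa [mul_comm] at muv
  have mwv : w * v = 0 := by rwa [mul_comm] at mvw
  have muw : u * w = 0 := by rwa [mul_comm] at mwu
  let U : {x : ↥(amalg R I) // x ≠ 0 ∧ x ∈ zdSet ↥(amalg R I)} := ⟨u, hu, ⟨v, hv, muv⟩⟩
  let V : {x : ↥(amalg R I) // x ≠ 0 ∧ x ∈ zdSet ↥(amalg R I)} := ⟨v, hv, ⟨w, hw, mvw⟩⟩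
  let W : {x : ↥(amalg R I) // x ≠ 0 ∧ x ∈ zdSet ↥(amalg R I)} := ⟨w, hw, ⟨u, hu, mwu⟩⟩
  have a1 : (zdGraph ↥(amalg R I)).Adj U V := ⟨fun h => huv (congrArg Subtype.val h), muv⟩
  have a2 : (zdGraph ↥(amalg R I)).Adj V W := ⟨fun h => hvw (congrArg Subtype.val h), mvw⟩
  have a3 : (zdGraph ↥(amalg R I)).Adj W U :=
    ⟨fun h => huw (congrArg Subtype.val h).symm, mwu⟩
  obtain ⟨c, hc, hlen⟩ := cycle3_of_triangle a1 a2 a3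
  refine le_antisymm ?_ three_le_egirth
  have h := egirth_le_of_cycle hc
  rw [hlen] at h
  exact_mod_cast h

lemma amalg_four_le_egirth [IsDomain R] : 4 ≤ (zdGraph ↥(amalg R I)).egirth := by
  rw [le_egirth]
  intro a w hw
  have h3 := hw.three_le_length
  rcases Nat.lt_or_ge w.length 4 with h4 | h4
  · have hl : w.length = 3 := by omega
    obtain ⟨u, v, x, a1, a2, a3⟩ := triangle_of_cycle3 w hl
    exact (amalg_no_triangle u.2.1 v.2.1 x.2.1 a1.2 a2.2 a3.2).elim
  · exact_mod_cast h4

lemma amalg_egirth_le_four {a b : R} (haI : a ∈ I) (hbI : b ∈ I)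
    (ha : a ≠ 0) (hb : b ≠ 0) (hab : a ≠ b) : (zdGraph ↥(amalg R I)).egirth ≤ 4 := by
  have hma : (0 : R) - a ∈ I := by simpa using I.neg_mem haI
  have hpa : a - 0 ∈ I := by simpa using haI
  have hmb : (0 : R) - b ∈ I := by simpa using I.neg_mem hbI
  have hpb : b - 0 ∈ I := by simpa using hbI
  set e1 : ↥(amalg R I) := mk2 a 0 hma with he1
  set e2 : ↥(amalg R I) := mk2 0 a hpa with he2
  set e3 : ↥(amalg R I) := mk2 b 0 hmb with he3
  set e4 : ↥(amalg R I) := mk2 0 b hpb with he4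
  have ne1 : e1 ≠ 0 := by rw [he1, Ne, mk2_eq_zero_iff]; tauto
  have ne2 : e2 ≠ 0 := by rw [he2, Ne, mk2_eq_zero_iff]; tauto
  have ne3 : e3 ≠ 0 := by rw [he3, Ne, mk2_eq_zero_iff]; tauto
  have ne4 : e4 ≠ 0 := by rw [he4, Ne, mk2_eq_zero_iff]; tauto
  have m12 : e1 * e2 = 0 := by rw [he1, he2, mk2_mul_eq_zero_iff]; constructor <;> ring
  have m23 : e2 * e3 = 0 := by rw [he2, he3, mk2_mul_eq_zero_iff]; constructor <;> ring
  have m34 : e3 * e4 = 0 := by rw [he3, he4, mk2_mul_eq_zero_iff]; constructor <;> ring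
  have m41 : e4 * e1 = 0 := by rw [he4, he1, mk2_mul_eq_zero_iff]; constructor <;> ring
  have d12 : e1 ≠ e2 := by rw [he1, he2, Ne, mk2_eq_iff]; tauto
  have d23 : e2 ≠ e3 := by rw [he2, he3, Ne, mk2_eq_iff]; tauto
  have d34 : e3 ≠ e4 := by rw [he3, he4, Ne, mk2_eq_iff]; tauto
  have d41 : e4 ≠ e1 := by rw [he4, he1, Ne, mk2_eq_iff]; tauto
  have d13 : e1 ≠ e3 := by rw [he1, he3, Ne, mk2_eq_iff]; tauto
  have d24 : e2 ≠ e4 := by rw [he2, he4, Ne, mk2_eq_iff]; tauto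
  let V1 : {x : ↥(amalg R I) // x ≠ 0 ∧ x ∈ zdSet ↥(amalg R I)} := ⟨e1, ne1, ⟨e2, ne2, m12⟩⟩
  let V2 : {x : ↥(amalg R I) // x ≠ 0 ∧ x ∈ zdSet ↥(amalg R I)} := ⟨e2, ne2, ⟨e3, ne3, m23⟩⟩
  let V3 : {x : ↥(amalg R I) // x ≠ 0 ∧ x ∈ zdSet ↥(amalg R I)} := ⟨e3, ne3, ⟨e4, ne4, m34⟩⟩
  let V4 : {x : ↥(amalg R I) // x ≠ 0 ∧ x ∈ zdSet ↥(amalg R I)} := ⟨e4, ne4, ⟨e1, ne1, m41⟩⟩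
  have a1 : (zdGraph ↥(amalg R I)).Adj V1 V2 := ⟨fun h => d12 (congrArg Subtype.val h), m12⟩
  have a2 : (zdGraph ↥(amalg R I)).Adj V2 V3 := ⟨fun h => d23 (congrArg Subtype.val h), m23⟩
  have a3 : (zdGraph ↥(amalg R I)).Adj V3 V4 := ⟨fun h => d34 (congrArg Subtype.val h), m34⟩
  have a4 : (zdGraph ↥(amalg R I)).Adj V4 V1 := ⟨fun h => d41 (congrArg Subtype.val h), m41⟩
  obtain ⟨c, hc, hlen⟩ := cycle4_of_square a1 a2 a3 a4
    (fun h => d13 (congrArg Subtype.val h)) (fun h => d24 (congrArg Subtype.val h))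
  have h := egirth_le_of_cycle hc
  rw [hlen] at h
  exact_mod_cast h

lemma amalg_acyclic [IsDomain R] {i : R} (hiI : i ∈ I) (hi : i ≠ 0)
    (hIall : ∀ j ∈ I, j = 0 ∨ j = i) : (zdGraph ↥(amalg R I)).IsAcyclic := by
  have classify : ∀ x : {x : ↥(amalg R I) // x ≠ 0 ∧ x ∈ zdSet ↥(amalg R I)},
      ((x.1 : R × R)) = (i, 0) ∨ ((x.1 : R × R)) = (0, i) := by
    rintro ⟨⟨p, hpmem⟩, hp0, q, hq0, hmul⟩
    rw [amalg_mul_eq_zero_iff] at hmul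
    simp only [Ne, amalg_eq_zero_iff, not_and_or] at hp0 hq0
    obtain ⟨h1, h2⟩ := hmul
    by_cases hq1 : (q : R × R).1 = 0
    · have hq2 : (q : R × R).2 ≠ 0 := by tauto
      have hp2 : p.2 = 0 := by rcases mul_eq_zero.mp h2 with h | h; exact h; exact absurd h hq2
      have hp1 : p.1 ≠ 0 := by tauto
      have hp1I : p.1 ∈ I := by
        have hm : p.2 - p.1 ∈ I := hpmem
        rw [hp2] at hm
        simpa using I.neg_mem hm
      have := (hIall _ hp1I).resolve_left hp1
      left
      rw [Prod.ext_iff]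
      exact ⟨this, hp2⟩
    · have hp1 : p.1 = 0 := by rcases mul_eq_zero.mp h1 with h | h; exact h; exact absurd h hq1
      have hp2 : p.2 ≠ 0 := by tauto
      have hp2I : p.2 ∈ I := by
        have hm : p.2 - p.1 ∈ I := hpmem
        rw [hp1] at hm
        simpa using hm
      have := (hIall _ hp2I).resolve_left hp2
      right
      rw [Prod.ext_iff]
      exact ⟨hp1, this⟩
  intro v c hc
  have hnd : c.support.tail.Nodup := ((SimpleGraph.Walk.isCycle_def c).mp hc).2.2
  have hlen : 3 ≤ c.support.tail.length := by
    rw [List.length_tail, SimpleGraph.Walk.length_support]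
    simpa using hc.three_le_length
  generalize hl : c.support.tail = l at hnd hlen
  rcases l with _ | ⟨p, _ | ⟨q, _ | ⟨r, t⟩⟩⟩
  · simp at hlen
  · simp at hlen
  · simp at hlen
  · have hpq : p ≠ q := by intro h; subst h; simp at hnd
    have hpr : p ≠ r := by intro h; subst h; simp at hnd
    have hqr : q ≠ r := by intro h; subst h; simp at hnd
    rcases classify p with hp | hp <;> rcases classify q with hq | hq <;>
      rcases classify r with hr | hr <;>
      first
      | exact hpq (Subtype.ext (Subtype.ext (hp.trans hq.symm)))
      | exact hpr (Subtype.ext (Subtype.ext (hp.trans hr.symm)))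
      | exact hqr (Subtype.ext (Subtype.ext (hq.trans hr.symm)))

lemma two_elt_ideal [IsDomain R] (hI : I ≠ ⊥)
    (hno : ¬∃ a b c : ↥I, a ≠ b ∧ a ≠ c ∧ b ≠ c) :
    ∃ i ∈ I, i ≠ 0 ∧ (∀ j ∈ I, j = 0 ∨ j = i) ∧ I = ⊤ ∧ Nat.card R = 2 := by
  obtain ⟨i, hiI, hi⟩ := (Submodule.ne_bot_iff I).mp hI
  push_neg at hno
  have hIall : ∀ j ∈ I, j = 0 ∨ j = i := by
    intro j hj
    by_cases hj0 : j = 0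
    · exact Or.inl hj0
    · right
      have h := hno ⟨0, I.zero_mem⟩ ⟨i, hiI⟩ ⟨j, hj⟩
        (fun h => hi (congrArg Subtype.val h).symm)
        (fun h => hj0 (congrArg Subtype.val h).symm)
      exact (congrArg Subtype.val h).symm
  have hall01 : ∀ r : R, r = 0 ∨ r = 1 := by
    intro r
    have hr : r * i ∈ I := I.mul_mem_left r hiI
    rcases hIall _ hr with h | h
    · rcases mul_eq_zero.mp h with h' | h'
      · exact Or.inl h'
      · exact absurd h' hi
    · right
      have hsub : (r - 1) * i = 0 := by rw [sub_mul, one_mul, h, sub_self]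
      rcases mul_eq_zero.mp hsub with h' | h'
      · exact sub_eq_zero.mp h'
      · exact absurd h' hi
  have hEq : I = ⊤ := by
    have h1 : i = 1 := (hall01 i).resolve_left hi
    rw [Ideal.eq_top_iff_one, ← h1]
    exact hiI
  exact ⟨i, hiI, hi, hIall, hEq, card_two_of_all01 hall01⟩

lemma not_three_of_card_two (h : Nat.card R = 2)
    (habc : ∃ a b c : ↥I, a ≠ b ∧ a ≠ c ∧ b ≠ c) : False := by
  have hall := all01_of_card_two h
  obtain ⟨a, b, c, hab, hac, hbc⟩ := habc
  rcases hall (a : R) with ha | ha <;> rcases hall (b : R) with hb | hb <;>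
    rcases hall (c : R) with hc | hc <;>
    first
    | exact hab (Subtype.ext (ha.trans hb.symm))
    | exact hac (Subtype.ext (ha.trans hc.symm))
    | exact hbc (Subtype.ext (hb.trans hc.symm))

end Helpers3

/-- for a nonzero ideal `I`: `girth Γ(R ⋈ I) = 3` iff `R` is not a domain;
`girth Γ(R ⋈ I) = 4` iff `R` is a domain and `I` has at least `3` elements;
`girth Γ(R ⋈ I) = ∞` iff `I = R` and `R` has exactly two elements (i.e. `R ≅ ℤ₂`). -/
theorem stmt8 (R : Type*) [CommRing R] [Nontrivial R] (I : Ideal R) (hI : I ≠ ⊥) :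
    ((zdGraph ↥(amalg R I)).egirth = 3 ↔ ¬ IsDomain R) ∧
    ((zdGraph ↥(amalg R I)).egirth = 4 ↔
      (IsDomain R ∧ ∃ a b c : ↥I, a ≠ b ∧ a ≠ c ∧ b ≠ c)) ∧
    ((zdGraph ↥(amalg R I)).egirth = ⊤ ↔ (I = ⊤ ∧ Nat.card R = 2)) := by
  classical
  by_cases hD : IsDomain R
  · haveI := hD
    by_cases h3 : ∃ a b c : ↥I, a ≠ b ∧ a ≠ c ∧ b ≠ c
    · -- egirth = 4
      have hle : (zdGraph ↥(amalg R I)).egirth ≤ 4 := by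
        obtain ⟨a, b, c, hab, hac, hbc⟩ := h3
        have key : ∃ u v : R, u ∈ I ∧ v ∈ I ∧ u ≠ 0 ∧ v ≠ 0 ∧ u ≠ v := by
          by_cases ha : (a : R) = 0
          · refine ⟨b, c, b.2, c.2, ?_, ?_, ?_⟩
            · intro h; exact hab (Subtype.ext (ha.trans h.symm))
            · intro h; exact hac (Subtype.ext (ha.trans h.symm))
            · intro h; exact hbc (Subtype.ext h)
          · by_cases hb : (b : R) = 0
            · refine ⟨a, c, a.2, c.2, ha, ?_, ?_⟩
              · intro h; exact hbc (Subtype.ext (hb.trans h.symm))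
              · intro h; exact hac (Subtype.ext h)
            · exact ⟨a, b, a.2, b.2, ha, hb, fun h => hab (Subtype.ext h)⟩
        obtain ⟨u, v, huI, hvI, hu, hv, huv⟩ := key
        exact amalg_egirth_le_four huI hvI hu hv huv
      have heq : (zdGraph ↥(amalg R I)).egirth = 4 := le_antisymm hle amalg_four_le_egirth
      rw [heq]
      refine ⟨⟨fun h => absurd h (by decide), fun h => absurd hD h⟩,
        ⟨fun _ => ⟨hD, h3⟩, fun _ => rfl⟩,
        ⟨fun h => absurd h (by decide), ?_⟩⟩
      rintro ⟨-, hcard⟩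
      exact absurd (not_three_of_card_two hcard h3) id
    · -- egirth = ⊤
      obtain ⟨i, hiI, hi, hIall, hItop, hcard⟩ := two_elt_ideal hI h3
      have heq : (zdGraph ↥(amalg R I)).egirth = ⊤ :=
        (amalg_acyclic hiI hi hIall).egirth_eq_top
      rw [heq]
      refine ⟨⟨fun h => absurd h (by decide), fun h => absurd hD h⟩,
        ⟨fun h => absurd h (by decide), fun h => absurd h.2 h3⟩,
        ⟨fun _ => ⟨hItop, hcard⟩, fun _ => rfl⟩⟩
  · -- egirth = 3
    have heq := amalg_egirth_eq_three hI hD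
    rw [heq]
    refine ⟨⟨fun _ => hD, fun _ => rfl⟩,
      ⟨fun h => absurd h (by decide), fun h => absurd h.1 hD⟩,
      ⟨fun h => absurd h (by decide), ?_⟩⟩
    rintro ⟨-, hcard⟩
    exact absurd (domain_of_card_two hcard) hD
end

section
/- One has xy = 0 for all x, y ∈ Z(R⋈I) if and only if both: xy = 0 for all x, y ∈ Z(R), and I ⊆ Z(R). -/
/-- `xy = 0` for all zero-divisors `x, y` of `R ⋈ I` iff
`xy = 0` for all zero-divisors `x, y` of `R` and `I ⊆ Z(R)`. -/
theorem stmt10 (R : Type*) [CommRing R] [Nontrivial R] (I : Ideal R) :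
    (∀ x y : ↥(amalg R I), x ∈ zdSet ↥(amalg R I) → y ∈ zdSet ↥(amalg R I) → x * y = 0) ↔
    ((∀ x y : R, x ∈ zdSet R → y ∈ zdSet R → x * y = 0) ∧ (I : Set R) ⊆ zdSet R) := by

  constructor
  · intro H
    constructor
    · intro x y hx hy
      obtain ⟨z, hz, hxz⟩ := hx
      obtain ⟨w, hw, hyw⟩ := hy
      have hdiag : ∀ a : R, ((a, a) : R × R) ∈ amalg R I := fun a => by
        have : ((a, a) : R × R).2 - ((a, a) : R × R).1 ∈ I := by simp
        exact this
      have hXd := hdiag x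
      have hYd := hdiag y
      have hZd := hdiag z
      have hWd := hdiag w
      set X : ↥(amalg R I) := ⟨(x, x), hXd⟩
      set Y : ↥(amalg R I) := ⟨(y, y), hYd⟩
      have hX : X ∈ zdSet ↥(amalg R I) := by
        refine ⟨⟨(z, z), hZd⟩, ?_, ?_⟩
        · intro h
          exact hz (congrArg (fun a : ↥(amalg R I) => (a : R × R).1) h)
        · ext <;> simpa using hxz
      have hY : Y ∈ zdSet ↥(amalg R I) := by
        refine ⟨⟨(w, w), hWd⟩, ?_, ?_⟩
        · intro h
          exact hw (congrArg (fun a : ↥(amalg R I) => (a : R × R).1) h)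
        · ext <;> simpa using hyw
      have := H X Y hX hY
      have h1 : ((X * Y : ↥(amalg R I)) : R × R).1 = 0 := by rw [this]; rfl
      simpa using h1
    · intro i hi
      by_cases h0 : i = 0
      · exact ⟨1, one_ne_zero, by simp [h0]⟩
      · have hEd : ((0, i) : R × R) ∈ amalg R I := by
          have : ((0, i) : R × R).2 - ((0, i) : R × R).1 ∈ I := by simpa using hi
          exact this
        have hFd : ((i, 0) : R × R) ∈ amalg R I := by
          have : ((i, 0) : R × R).2 - ((i, 0) : R × R).1 ∈ I := by simpa using I.neg_mem hi
          exact this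
        set E : ↥(amalg R I) := ⟨(0, i), hEd⟩
        have hE : E ∈ zdSet ↥(amalg R I) := by
          refine ⟨⟨(i, 0), hFd⟩, ?_, ?_⟩
          · intro h
            exact h0 (congrArg (fun a : ↥(amalg R I) => (a : R × R).1) h)
          · ext <;> simp [E]
        have := H E E hE hE
        have h2 : ((E * E : ↥(amalg R I)) : R × R).2 = 0 := by rw [this]; rfl
        exact ⟨i, h0, by simpa using h2⟩
  · rintro ⟨ha, hb⟩
    -- Z(R) is closed under addition
    have hadd : ∀ a b : R, a ∈ zdSet R → b ∈ zdSet R → a + b ∈ zdSet R := by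
      intro a b haz hbz
      by_cases h0 : a = 0
      · simpa [h0] using hbz
      · refine ⟨a, h0, ?_⟩
        linear_combination ha a a haz haz + ha b a hbz haz
    -- components of a zero-divisor of the amalgamation are zero-divisors of R
    have key : ∀ x : ↥(amalg R I), x ∈ zdSet ↥(amalg R I) →
        ((x : R × R).1 ∈ zdSet R ∧ (x : R × R).2 ∈ zdSet R) := by
      intro x hx
      obtain ⟨y, hy0, hxy⟩ := hx
      have h1 : (x : R × R).1 * (y : R × R).1 = 0 :=
        congrArg (fun a : ↥(amalg R I) => (a : R × R).1) hxy
      have h2 : (x : R × R).2 * (y : R × R).2 = 0 :=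
        congrArg (fun a : ↥(amalg R I) => (a : R × R).2) hxy
      have hi : (x : R × R).2 - (x : R × R).1 ∈ I := x.2
      have hiZ : (x : R × R).2 - (x : R × R).1 ∈ zdSet R := hb hi
      have hiZ' : (x : R × R).1 - (x : R × R).2 ∈ zdSet R := hb (by simpa using I.neg_mem hi)
      by_cases hy1 : (y : R × R).1 = 0
      · have hy2 : (y : R × R).2 ≠ 0 := by
          intro hy2
          apply hy0
          ext
          · simpa using hy1
          · simpa using hy2
        have hx2 : (x : R × R).2 ∈ zdSet R := ⟨_, hy2, h2⟩
        have hx1 : (x : R × R).1 ∈ zdSet R := by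
          have := hadd _ _ hx2 hiZ'
          simpa using this
        exact ⟨hx1, hx2⟩
      · have hx1 : (x : R × R).1 ∈ zdSet R := ⟨_, hy1, h1⟩
        have hx2 : (x : R × R).2 ∈ zdSet R := by
          have := hadd _ _ hx1 hiZ
          simpa using this
        exact ⟨hx1, hx2⟩
    intro x y hx hy
    obtain ⟨hx1, hx2⟩ := key x hx
    obtain ⟨hy1, hy2⟩ := key y hy
    ext
    · exact ha _ _ hx1 hy1
    · exact ha _ _ hx2 hy2
end

section
/- Suppose that R is not an integral domain (i.e. R has a nonzero zero-divisor), that I ⊄ Z(R), and that Z(R) is an ideal of R. Then the diameter of the zero-divisor graph Γ(R⋈I) equals 3. -/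
section Aux

variable {S : Type*} [CommRing S]

private lemma edist_le_one_of_eq_or_adj {V : Type*} (G : SimpleGraph V) {u v : V}
    (h : u = v ∨ G.Adj u v) : G.edist u v ≤ 1 := by
  rcases h with rfl | h
  · simp [SimpleGraph.edist_self]
  · exact (SimpleGraph.edist_le h.toWalk).trans (by simp)

/-- Anderson–Livingston-type chain: between any two vertices of the zero-divisor graph
there is a chain of length three where consecutive entries are equal or adjacent. -/
private lemma zd_chain3 (S : Type*) [CommRing S] (u v : {x : S // x ≠ 0 ∧ x ∈ zdSet S}) :
    ∃ p q : {x : S // x ≠ 0 ∧ x ∈ zdSet S},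
      (u = p ∨ (zdGraph S).Adj u p) ∧ (p = q ∨ (zdGraph S).Adj p q) ∧
        (q = v ∨ (zdGraph S).Adj q v) := by
  by_cases huv : u = v
  · exact ⟨u, v, Or.inl rfl, Or.inl huv, Or.inl rfl⟩
  obtain ⟨x, hx0, hxz⟩ := u
  obtain ⟨y, hy0, hyz⟩ := v
  have hxy : x ≠ y := fun h => huv (Subtype.ext h)
  by_cases hmul : x * y = 0
  · exact ⟨_, _, Or.inl rfl, Or.inr ⟨huv, hmul⟩, Or.inl rfl⟩
  obtain ⟨a, ha0, hxa⟩ := hxz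
  obtain ⟨b, hb0, hyb⟩ := hyz
  have hay : a ≠ y := fun h => hmul (h ▸ hxa)
  have hbx : b ≠ x := fun h => hmul (by rw [mul_comm]; exact h ▸ hyb)
  by_cases hab : a * b = 0
  · by_cases hax : a = x
    · -- path x — b — y
      have hxb : x * b = 0 := hax ▸ hab
      have hby : b ≠ y := fun h => hmul (h ▸ hxb)
      refine ⟨⟨b, hb0, ⟨y, hy0, by rw [mul_comm]; exact hyb⟩⟩,
        ⟨b, hb0, ⟨y, hy0, by rw [mul_comm]; exact hyb⟩⟩, ?_, Or.inl rfl, ?_⟩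
      · exact Or.inr ⟨fun h => hbx (congrArg Subtype.val h).symm, hxb⟩
      · exact Or.inr ⟨fun h => hby (congrArg Subtype.val h), by rw [mul_comm]; exact hyb⟩
    · by_cases hby : b = y
      · -- path x — a — y
        have hya : a * y = 0 := hby ▸ hab
        refine ⟨⟨a, ha0, ⟨x, hx0, by rw [mul_comm]; exact hxa⟩⟩,
          ⟨a, ha0, ⟨x, hx0, by rw [mul_comm]; exact hxa⟩⟩, ?_, Or.inl rfl, ?_⟩
        · exact Or.inr ⟨fun h => hax (congrArg Subtype.val h).symm, hxa⟩
        · exact Or.inr ⟨fun h => hay (congrArg Subtype.val h), hya⟩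
      · by_cases hab' : a = b
        · -- common annihilator a = b
          have hya : a * y = 0 := by rw [mul_comm]; exact hab' ▸ hyb
          refine ⟨⟨a, ha0, ⟨x, hx0, by rw [mul_comm]; exact hxa⟩⟩,
            ⟨a, ha0, ⟨x, hx0, by rw [mul_comm]; exact hxa⟩⟩, ?_, Or.inl rfl, ?_⟩
          · exact Or.inr ⟨fun h => hax (congrArg Subtype.val h).symm, hxa⟩
          · exact Or.inr ⟨fun h => hay (congrArg Subtype.val h), hya⟩
        · -- path x — a — b — y
          refine ⟨⟨a, ha0, ⟨x, hx0, by rw [mul_comm]; exact hxa⟩⟩,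
            ⟨b, hb0, ⟨y, hy0, by rw [mul_comm]; exact hyb⟩⟩, ?_, ?_, ?_⟩
          · exact Or.inr ⟨fun h => hax (congrArg Subtype.val h).symm, hxa⟩
          · exact Or.inr ⟨fun h => hab' (congrArg Subtype.val h), hab⟩
          · exact Or.inr ⟨fun h => hby (congrArg Subtype.val h), by rw [mul_comm]; exact hyb⟩
  · -- m = a*b is a common annihilator
    have hxm : x * (a * b) = 0 := by rw [← mul_assoc, hxa, zero_mul]
    have hmy : (a * b) * y = 0 := by
      rw [mul_assoc, mul_comm b y, hyb, mul_zero]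
    have hmx : a * b ≠ x := fun h => hmul (by rw [← h]; exact hmy)
    have hmy' : a * b ≠ y := fun h => hmul (by rw [← h]; exact hxm)
    refine ⟨⟨a * b, hab, ⟨x, hx0, by rw [mul_comm]; exact hxm⟩⟩,
      ⟨a * b, hab, ⟨x, hx0, by rw [mul_comm]; exact hxm⟩⟩, ?_, Or.inl rfl, ?_⟩
    · exact Or.inr ⟨fun h => hmx (congrArg Subtype.val h).symm, hxm⟩
    · exact Or.inr ⟨fun h => hmy' (congrArg Subtype.val h), hmy⟩

private lemma zd_edist_le_three (S : Type*) [CommRing S]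
    (u v : {x : S // x ≠ 0 ∧ x ∈ zdSet S}) : (zdGraph S).edist u v ≤ 3 := by
  obtain ⟨p, q, h1, h2, h3⟩ := zd_chain3 S u v
  calc (zdGraph S).edist u v
      ≤ (zdGraph S).edist u p + (zdGraph S).edist p v := SimpleGraph.edist_triangle
    _ ≤ (zdGraph S).edist u p + ((zdGraph S).edist p q + (zdGraph S).edist q v) := by
        gcongr; exact SimpleGraph.edist_triangle
    _ ≤ 1 + (1 + 1) := by
        gcongr <;> [exact edist_le_one_of_eq_or_adj _ h1;
          exact edist_le_one_of_eq_or_adj _ h2; exact edist_le_one_of_eq_or_adj _ h3]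
    _ = 3 := by norm_num

private lemma three_le_edist {V : Type*} (G : SimpleGraph V) {u v : V}
    (h1 : u ≠ v) (h2 : ¬ G.Adj u v) (h3 : ∀ m, ¬(G.Adj u m ∧ G.Adj m v)) :
    3 ≤ G.edist u v := by
  rw [SimpleGraph.edist_eq_sInf]
  refine le_sInf ?_
  rintro b ⟨p, rfl⟩
  cases p with
  | nil => exact absurd rfl h1
  | cons h q =>
    cases q with
    | nil => exact absurd h h2
    | cons h' q' =>
      cases q' with
      | nil => exact absurd ⟨h, h'⟩ (h3 _)
      | cons h'' q'' =>
        simp only [SimpleGraph.Walk.length_cons]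
        exact_mod_cast by omega

end Aux

/-- if `R` is not a domain, `I ⊄ Z(R)`, and `Z(R)` is an ideal of `R`,
then `diam Γ(R ⋈ I) = 3`. -/
theorem stmt12 (R : Type*) [CommRing R] [Nontrivial R] (I : Ideal R)
    (hR : ∃ x : R, x ≠ 0 ∧ x ∈ zdSet R)
    (hInz : ¬ (I : Set R) ⊆ zdSet R)
    (hZ : ∃ J : Ideal R, (J : Set R) = zdSet R) :
    (zdGraph ↥(amalg R I)).ediam = 3 := by
  classical
  obtain ⟨i, hiI, hiz⟩ := Set.not_subset.mp hInz
  obtain ⟨z, hz0, w, hw0, hzw⟩ := hR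
  obtain ⟨J, hJ⟩ := hZ
  have hreg : ∀ x : R, i * x = 0 → x = 0 := by
    intro x hx; by_contra h; exact hiz ⟨x, h, hx⟩
  have hzJ : z ∈ J := by rw [← SetLike.mem_coe, hJ]; exact ⟨w, hw0, hzw⟩
  have hziz : z + i ∉ zdSet R := by
    intro h
    have h1 : z + i ∈ J := by rw [← SetLike.mem_coe, hJ]; exact h
    have h2 : i ∈ J := by simpa using J.sub_mem h1 hzJ
    rw [← SetLike.mem_coe, hJ] at h2
    exact hiz h2
  have hzireg : ∀ x : R, (z + i) * x = 0 → x = 0 := by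
    intro x hx; by_contra h; exact hziz ⟨x, h, hx⟩
  have hi0 : i ≠ 0 := fun h => hiz ⟨1, one_ne_zero, by rw [h, zero_mul]⟩
  have hzi0 : z + i ≠ 0 := fun h => hziz ⟨1, one_ne_zero, by rw [h, zero_mul]⟩
  have hwi0 : w * i ≠ 0 := fun h => hw0 (hreg w (by rw [mul_comm] at h; exact h))
  have hXmem : ((z, z + i) : R × R) ∈ amalg R I := by
    show (z + i) - z ∈ I; simpa using hiI
  have hYmem : ((z + i, z) : R × R) ∈ amalg R I := by
    show z - (z + i) ∈ I; simpa using I.neg_mem hiI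
  have hAmem : ((w * i, 0) : R × R) ∈ amalg R I := by
    show (0 : R) - w * i ∈ I; simpa using I.neg_mem (I.mul_mem_left w hiI)
  have hBmem : ((0, w * i) : R × R) ∈ amalg R I := by
    show w * i - (0 : R) ∈ I; simpa using I.mul_mem_left w hiI
  set X : amalg R I := ⟨(z, z + i), hXmem⟩ with hXdef
  set Y : amalg R I := ⟨(z + i, z), hYmem⟩ with hYdef
  set A : amalg R I := ⟨(w * i, 0), hAmem⟩ with hAdef
  set B : amalg R I := ⟨(0, w * i), hBmem⟩ with hBdef
  have hX0 : X ≠ 0 := fun h => hz0 (congrArg Prod.fst (Subtype.ext_iff.mp h))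
  have hY0 : Y ≠ 0 := fun h => hzi0 (congrArg Prod.fst (Subtype.ext_iff.mp h))
  have hA0 : A ≠ 0 := fun h => hwi0 (congrArg Prod.fst (Subtype.ext_iff.mp h))
  have hB0 : B ≠ 0 := fun h => hwi0 (congrArg Prod.snd (Subtype.ext_iff.mp h))
  have hXA : X * A = 0 := by
    apply Subtype.ext
    show ((z, z + i) : R × R) * (w * i, 0) = 0
    refine Prod.ext ?_ ?_
    · show z * (w * i) = 0; rw [← mul_assoc, hzw, zero_mul]
    · show (z + i) * 0 = 0; rw [mul_zero]
  have hYB : Y * B = 0 := by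
    apply Subtype.ext
    show ((z + i, z) : R × R) * (0, w * i) = 0
    refine Prod.ext ?_ ?_
    · show (z + i) * 0 = 0; rw [mul_zero]
    · show z * (w * i) = 0; rw [← mul_assoc, hzw, zero_mul]
  set VX : {x : ↥(amalg R I) // x ≠ 0 ∧ x ∈ zdSet ↥(amalg R I)} :=
    ⟨X, hX0, A, hA0, hXA⟩ with hVXdef
  set VY : {x : ↥(amalg R I) // x ≠ 0 ∧ x ∈ zdSet ↥(amalg R I)} :=
    ⟨Y, hY0, B, hB0, hYB⟩ with hVYdef
  have key1 : VX ≠ VY := by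
    intro h
    have h1 : X = Y := congrArg Subtype.val h
    have h2 : z = z + i := congrArg Prod.fst (Subtype.ext_iff.mp h1)
    exact hi0 (left_eq_add.mp h2)
  have coe_mul_eq : ∀ (s t : ↥(amalg R I)), ((s * t : ↥(amalg R I)) : R × R) = (s : R × R) * (t : R × R) := fun s t => rfl
  have key2 : ¬ (zdGraph ↥(amalg R I)).Adj VX VY := by
    rintro ⟨-, h⟩
    have h0 := Subtype.ext_iff.mp h
    rw [coe_mul_eq] at h0
    have h1 : z * (z + i) = 0 := congrArg Prod.fst h0
    exact hz0 (hzireg z (by rw [mul_comm]; exact h1))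
  have key3 : ∀ m, ¬((zdGraph ↥(amalg R I)).Adj VX m ∧ (zdGraph ↥(amalg R I)).Adj m VY) := by
    rintro ⟨⟨⟨c, d⟩, hcd⟩, hm⟩ ⟨⟨-, h1⟩, ⟨-, h2⟩⟩
    have h1' := Subtype.ext_iff.mp h1
    have h2' := Subtype.ext_iff.mp h2
    rw [coe_mul_eq] at h1' h2'
    have hd : (z + i) * d = 0 := congrArg Prod.snd h1'
    have hc : c * (z + i) = 0 := congrArg Prod.fst h2'
    have hd0 : d = 0 := hzireg d hd
    have hc0 : c = 0 := hzireg c (by rw [mul_comm]; exact hc)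
    refine hm.1 (Subtype.ext ?_)
    show ((c, d) : R × R) = 0
    exact Prod.ext hc0 hd0
  refine le_antisymm (SimpleGraph.ediam_le_of_edist_le (zd_edist_le_three _)) ?_
  exact le_trans (three_le_edist _ key1 key2 key3) SimpleGraph.edist_le_ediam
end

section
/- Suppose that I ⊄ Z(R) and that there exists a vertex of Γ(R) adjacent to every other vertex, i.e. there exists x ∈ Z(R)\{0} such that xy = 0 for every y ∈ Z(R)\{0} with y ≠ x. Then the diameter of the zero-divisor graph Γ(R⋈I) equals 3. -/
/-! ### Auxiliary lemmas -/

lemma amalg_mem_iff {R : Type*} [CommRing R] {I : Ideal R} {a b : R} :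
    (a, b) ∈ amalg R I ↔ b - a ∈ I := Iff.rfl

lemma amalg_mk_eq_mk {R : Type*} [CommRing R] {I : Ideal R} {a b c d : R}
    (h : (a,b) ∈ amalg R I) (h' : (c,d) ∈ amalg R I) :
    (⟨(a,b),h⟩ : ↥(amalg R I)) = ⟨(c,d),h'⟩ ↔ a = c ∧ b = d := by
  simp [Subtype.ext_iff, Prod.ext_iff]

lemma amalg_mk_eq_zero {R : Type*} [CommRing R] {I : Ideal R} {a b : R}
    (h : (a,b) ∈ amalg R I) :
    (⟨(a,b),h⟩ : ↥(amalg R I)) = 0 ↔ a = 0 ∧ b = 0 := by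
  simp [Subtype.ext_iff, Prod.ext_iff]

lemma amalg_mul_mk {R : Type*} [CommRing R] {I : Ideal R} {a b c d : R}
    (h : (a,b) ∈ amalg R I) (h' : (c,d) ∈ amalg R I) :
    (⟨(a,b),h⟩ : ↥(amalg R I)) * ⟨(c,d),h'⟩
      = ⟨(a*c, b*d), mul_mem h h'⟩ := by
  simp [Subtype.ext_iff, Prod.ext_iff]

open SimpleGraph in
lemma aux_edist_le_one {V : Type*} {G : SimpleGraph V} {u v : V}
    (h : u = v ∨ G.Adj u v) : G.edist u v ≤ 1 := by
  rcases h with rfl | h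
  · simp
  · exact le_of_eq (edist_eq_one_iff_adj.mpr h)

open SimpleGraph in
lemma aux_three_le_edist {V : Type*} {G : SimpleGraph V} {u v : V}
    (h0 : u ≠ v) (h1 : ¬ G.Adj u v)
    (h2 : ∀ w, ¬(G.Adj u w ∧ G.Adj w v)) : 3 ≤ G.edist u v := by
  rw [SimpleGraph.edist]
  refine le_iInf fun p => ?_
  match p with
  | SimpleGraph.Walk.nil => exact absurd rfl h0
  | SimpleGraph.Walk.cons h SimpleGraph.Walk.nil => exact absurd h h1
  | SimpleGraph.Walk.cons h (SimpleGraph.Walk.cons h' SimpleGraph.Walk.nil) =>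
      exact absurd ⟨h, h'⟩ (h2 _)
  | SimpleGraph.Walk.cons _ (SimpleGraph.Walk.cons _ (SimpleGraph.Walk.cons _ q)) =>
      simp only [SimpleGraph.Walk.length_cons]
      exact_mod_cast by omega

section Main

variable {R : Type*} [CommRing R] [Nontrivial R] {I : Ideal R} {ω x z₀ : R}

/-- Upper bound: any two vertices of `Γ(R ⋈ I)` are at distance at most 3. -/
lemma aux_upper (hωI : ω ∈ I) (hreg : ∀ y : R, ω * y = 0 → y = 0)
    (hx0 : x ≠ 0) (hz₀0 : z₀ ≠ 0) (hxz₀ : x * z₀ = 0)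
    (hxuniv : ∀ y : R, y ≠ 0 → y ∈ zdSet R → y ≠ x → x * y = 0)
    (U V : {p : ↥(amalg R I) // p ≠ 0 ∧ p ∈ zdSet ↥(amalg R I)}) :
    (zdGraph ↥(amalg R I)).edist U V ≤ 3 := by
  have hzω : ∀ z : R, z ≠ 0 → z * ω ≠ 0 := fun z hz h => hz (hreg z (by rwa [mul_comm] at h))
  have memH1 : ∀ z : R, ((z * ω, 0) : R × R) ∈ amalg R I := fun z => by
    rw [amalg_mem_iff]; simpa using I.neg_mem (I.mul_mem_left z hωI)
  have memH2 : ∀ z : R, ((0, z * ω) : R × R) ∈ amalg R I := fun z => by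
    rw [amalg_mem_iff]; simpa using I.mul_mem_left z hωI
  have isV1 : ∀ z : R, z ≠ 0 →
      (⟨(z*ω,0), memH1 z⟩ : ↥(amalg R I)) ≠ 0 ∧
        (⟨(z*ω,0), memH1 z⟩ : ↥(amalg R I)) ∈ zdSet ↥(amalg R I) := by
    intro z hz
    constructor
    · rw [Ne, amalg_mk_eq_zero]
      rintro ⟨h, -⟩; exact hzω z hz h
    · refine ⟨⟨(0, 1*ω), memH2 1⟩, ?_, ?_⟩
      · rw [Ne, amalg_mk_eq_zero]
        rintro ⟨-, h⟩; exact hzω 1 one_ne_zero h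
      · rw [amalg_mul_mk, amalg_mk_eq_zero]
        constructor <;> ring
  have isV2 : ∀ z : R, z ≠ 0 →
      (⟨(0, z*ω), memH2 z⟩ : ↥(amalg R I)) ≠ 0 ∧
        (⟨(0, z*ω), memH2 z⟩ : ↥(amalg R I)) ∈ zdSet ↥(amalg R I) := by
    intro z hz
    constructor
    · rw [Ne, amalg_mk_eq_zero]
      rintro ⟨-, h⟩; exact hzω z hz h
    · refine ⟨⟨(1*ω, 0), memH1 1⟩, ?_, ?_⟩
      · rw [Ne, amalg_mk_eq_zero]
        rintro ⟨h, -⟩; exact hzω 1 one_ne_zero h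
      · rw [amalg_mul_mk, amalg_mk_eq_zero]
        constructor <;> ring
  -- chooser
  have chooser : ∀ α : R, α ∈ zdSet R → ∃ z, z ≠ 0 ∧ α * z = 0 ∧ (z = z₀ ∨ z = x) := by
    intro α hα
    by_cases hα0 : α = 0
    · exact ⟨z₀, hz₀0, by rw [hα0, zero_mul], Or.inl rfl⟩
    by_cases hαx : α = x
    · exact ⟨z₀, hz₀0, by rw [hαx]; exact hxz₀, Or.inl rfl⟩
    · exact ⟨x, hx0, by rw [mul_comm]; exact hxuniv α hα0 hα hαx, Or.inr rfl⟩
  -- hubs pairwise within distance one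
  have h11 : ∀ (z w : R) (hz : z ≠ 0) (hw : w ≠ 0), z * w = 0 ∨ z = w →
      (zdGraph ↥(amalg R I)).edist ⟨_, isV1 z hz⟩ ⟨_, isV1 w hw⟩ ≤ 1 := by
    intro z w hz hw hzw
    apply aux_edist_le_one
    by_cases heq : (⟨_, isV1 z hz⟩ : {p : ↥(amalg R I) // p ≠ 0 ∧ p ∈ zdSet ↥(amalg R I)})
        = ⟨_, isV1 w hw⟩
    · exact Or.inl heq
    rcases hzw with hzw | rfl
    · refine Or.inr ⟨heq, ?_⟩
      show (⟨(z*ω,0), memH1 z⟩ : ↥(amalg R I)) * ⟨(w*ω,0), memH1 w⟩ = 0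
      rw [amalg_mul_mk, amalg_mk_eq_zero]
      exact ⟨by linear_combination ω * ω * hzw, by ring⟩
    · exact absurd rfl heq
  have h22 : ∀ (z w : R) (hz : z ≠ 0) (hw : w ≠ 0), z * w = 0 ∨ z = w →
      (zdGraph ↥(amalg R I)).edist ⟨_, isV2 z hz⟩ ⟨_, isV2 w hw⟩ ≤ 1 := by
    intro z w hz hw hzw
    apply aux_edist_le_one
    by_cases heq : (⟨_, isV2 z hz⟩ : {p : ↥(amalg R I) // p ≠ 0 ∧ p ∈ zdSet ↥(amalg R I)})
        = ⟨_, isV2 w hw⟩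
    · exact Or.inl heq
    rcases hzw with hzw | rfl
    · refine Or.inr ⟨heq, ?_⟩
      show (⟨(0,z*ω), memH2 z⟩ : ↥(amalg R I)) * ⟨(0,w*ω), memH2 w⟩ = 0
      rw [amalg_mul_mk, amalg_mk_eq_zero]
      exact ⟨by ring, by linear_combination ω * ω * hzw⟩
    · exact absurd rfl heq
  have h12 : ∀ (z w : R) (hz : z ≠ 0) (hw : w ≠ 0),
      (zdGraph ↥(amalg R I)).edist ⟨_, isV1 z hz⟩ ⟨_, isV2 w hw⟩ ≤ 1 := by
    intro z w hz hw
    apply aux_edist_le_one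
    refine Or.inr ⟨?_, ?_⟩
    · intro h
      rw [Subtype.ext_iff, amalg_mk_eq_mk] at h
      exact hzω z hz h.1
    · show (⟨(z*ω,0), memH1 z⟩ : ↥(amalg R I)) * ⟨(0,w*ω), memH2 w⟩ = 0
      rw [amalg_mul_mk, amalg_mk_eq_zero]
      exact ⟨by ring, by ring⟩
  have h21 : ∀ (z w : R) (hz : z ≠ 0) (hw : w ≠ 0),
      (zdGraph ↥(amalg R I)).edist ⟨_, isV2 z hz⟩ ⟨_, isV1 w hw⟩ ≤ 1 := by
    intro z w hz hw
    rw [SimpleGraph.edist_comm]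
    exact h12 w z hw hz
  -- edges from a vertex to a hub
  have edgeU1 : ∀ (a b : R) (hab : (a,b) ∈ amalg R I) (hv : _) (z : R) (hz : z ≠ 0),
      a * z = 0 →
      (zdGraph ↥(amalg R I)).edist ⟨⟨(a,b),hab⟩, hv⟩ ⟨_, isV1 z hz⟩ ≤ 1 := by
    intro a b hab hv z hz haz
    apply aux_edist_le_one
    by_cases heq : (⟨⟨(a,b),hab⟩, hv⟩ : {p : ↥(amalg R I) // p ≠ 0 ∧ p ∈ zdSet ↥(amalg R I)})
        = ⟨_, isV1 z hz⟩
    · exact Or.inl heq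
    refine Or.inr ⟨heq, ?_⟩
    show (⟨(a,b),hab⟩ : ↥(amalg R I)) * ⟨(z*ω,0), memH1 z⟩ = 0
    rw [amalg_mul_mk, amalg_mk_eq_zero]
    exact ⟨by linear_combination ω * haz, by ring⟩
  have edgeU2 : ∀ (a b : R) (hab : (a,b) ∈ amalg R I) (hv : _) (z : R) (hz : z ≠ 0),
      b * z = 0 →
      (zdGraph ↥(amalg R I)).edist ⟨⟨(a,b),hab⟩, hv⟩ ⟨_, isV2 z hz⟩ ≤ 1 := by
    intro a b hab hv z hz hbz
    apply aux_edist_le_one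
    by_cases heq : (⟨⟨(a,b),hab⟩, hv⟩ : {p : ↥(amalg R I) // p ≠ 0 ∧ p ∈ zdSet ↥(amalg R I)})
        = ⟨_, isV2 z hz⟩
    · exact Or.inl heq
    refine Or.inr ⟨heq, ?_⟩
    show (⟨(a,b),hab⟩ : ↥(amalg R I)) * ⟨(0,z*ω), memH2 z⟩ = 0
    rw [amalg_mul_mk, amalg_mk_eq_zero]
    exact ⟨by ring, by linear_combination ω * hbz⟩
  -- extract coordinates and zero-divisor info for U and V
  obtain ⟨⟨⟨a, b⟩, hab⟩, hU0, hUzd⟩ := U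
  obtain ⟨⟨⟨c, d⟩, hcd⟩, hV0, hVzd⟩ := V
  obtain ⟨⟨⟨s, t⟩, hst⟩, hy0, hy⟩ := hUzd
  obtain ⟨⟨⟨s', t'⟩, hst'⟩, hy0', hy'⟩ := hVzd
  rw [amalg_mul_mk, amalg_mk_eq_zero] at hy hy'
  have hsplitU : a ∈ zdSet R ∨ b ∈ zdSet R := by
    by_cases hs : s = 0
    · right
      refine ⟨t, ?_, hy.2⟩
      intro ht
      exact hy0 (by rw [amalg_mk_eq_zero]; exact ⟨hs, ht⟩)
    · exact Or.inl ⟨s, hs, hy.1⟩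
  have hsplitV : c ∈ zdSet R ∨ d ∈ zdSet R := by
    by_cases hs : s' = 0
    · right
      refine ⟨t', ?_, hy'.2⟩
      intro ht
      exact hy0' (by rw [amalg_mk_eq_zero]; exact ⟨hs, ht⟩)
    · exact Or.inl ⟨s', hs, hy'.1⟩
  have tri : ∀ (P Q W1 W2 : {p : ↥(amalg R I) // p ≠ 0 ∧ p ∈ zdSet ↥(amalg R I)}),
      (zdGraph ↥(amalg R I)).edist P W1 ≤ 1 →
      (zdGraph ↥(amalg R I)).edist W1 W2 ≤ 1 →
      (zdGraph ↥(amalg R I)).edist W2 Q ≤ 1 →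
      (zdGraph ↥(amalg R I)).edist P Q ≤ 3 := by
    intro P Q W1 W2 e1 e2 e3
    calc (zdGraph ↥(amalg R I)).edist P Q
        ≤ (zdGraph ↥(amalg R I)).edist P W1 + (zdGraph ↥(amalg R I)).edist W1 Q :=
          SimpleGraph.edist_triangle
      _ ≤ (zdGraph ↥(amalg R I)).edist P W1 +
            ((zdGraph ↥(amalg R I)).edist W1 W2 + (zdGraph ↥(amalg R I)).edist W2 Q) :=
          add_le_add_right SimpleGraph.edist_triangle _
      _ ≤ 1 + (1 + 1) := add_le_add e1 (add_le_add e2 e3)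
      _ = 3 := by norm_num
  have hzw_comp : ∀ z w : R, (z = z₀ ∨ z = x) → (w = z₀ ∨ w = x) → z * w = 0 ∨ z = w := by
    rintro z w (rfl | rfl) (rfl | rfl)
    · exact Or.inr rfl
    · exact Or.inl (by rw [mul_comm]; exact hxz₀)
    · exact Or.inl hxz₀
    · exact Or.inr rfl
  rcases hsplitU with hU' | hU' <;> rcases hsplitV with hV' | hV'
  · obtain ⟨z, hz, haz, hz2⟩ := chooser _ hU'
    obtain ⟨w, hw, hcw, hw2⟩ := chooser _ hV'
    exact tri _ _ _ _ (edgeU1 a b hab _ z hz haz)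
      (h11 z w hz hw (hzw_comp z w hz2 hw2))
      (by rw [SimpleGraph.edist_comm]; exact edgeU1 c d hcd _ w hw hcw)
  · obtain ⟨z, hz, haz, hz2⟩ := chooser _ hU'
    obtain ⟨w, hw, hdw, hw2⟩ := chooser _ hV'
    exact tri _ _ _ _ (edgeU1 a b hab _ z hz haz)
      (h12 z w hz hw)
      (by rw [SimpleGraph.edist_comm]; exact edgeU2 c d hcd _ w hw hdw)
  · obtain ⟨z, hz, hbz, hz2⟩ := chooser _ hU'
    obtain ⟨w, hw, hcw, hw2⟩ := chooser _ hV'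
    exact tri _ _ _ _ (edgeU2 a b hab _ z hz hbz)
      (h21 z w hz hw)
      (by rw [SimpleGraph.edist_comm]; exact edgeU1 c d hcd _ w hw hcw)
  · obtain ⟨z, hz, hbz, hz2⟩ := chooser _ hU'
    obtain ⟨w, hw, hdw, hw2⟩ := chooser _ hV'
    exact tri _ _ _ _ (edgeU2 a b hab _ z hz hbz)
      (h22 z w hz hw (hzw_comp z w hz2 hw2))
      (by rw [SimpleGraph.edist_comm]; exact edgeU2 c d hcd _ w hw hdw)


/-- Lower bound: there exist two vertices of `Γ(R ⋈ I)` at distance at least 3. -/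
lemma aux_lower (hωI : ω ∈ I) (hreg : ∀ y : R, ω * y = 0 → y = 0)
    (hx0 : x ≠ 0) (hz₀0 : z₀ ≠ 0) (hxz₀ : x * z₀ = 0)
    (hxuniv : ∀ y : R, y ≠ 0 → y ∈ zdSet R → y ≠ x → x * y = 0) :
    ∃ U V : {p : ↥(amalg R I) // p ≠ 0 ∧ p ∈ zdSet ↥(amalg R I)},
      3 ≤ (zdGraph ↥(amalg R I)).edist U V := by
  have hω0 : ω ≠ 0 := fun h => one_ne_zero (hreg 1 (by rw [h, zero_mul]))
  have hzω : ∀ z : R, z ≠ 0 → z * ω ≠ 0 := fun z hz h => hz (hreg z (by rwa [mul_comm] at h))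
  have memU : ((x, x + ω) : R × R) ∈ amalg R I := by
    rw [amalg_mem_iff]; simpa using hωI
  have memK1 : ((z₀ * ω, 0) : R × R) ∈ amalg R I := by
    rw [amalg_mem_iff]; simpa using I.neg_mem (I.mul_mem_left z₀ hωI)
  have memK2 : ((0, z₀ * ω) : R × R) ∈ amalg R I := by
    rw [amalg_mem_iff]; simpa using I.mul_mem_left z₀ hωI
  have hU0 : (⟨(x, x+ω), memU⟩ : ↥(amalg R I)) ≠ 0 := by
    rw [Ne, amalg_mk_eq_zero]; rintro ⟨h, -⟩; exact hx0 h
  have hUzd : (⟨(x, x+ω), memU⟩ : ↥(amalg R I)) ∈ zdSet ↥(amalg R I) := by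
    refine ⟨⟨(z₀*ω, 0), memK1⟩, ?_, ?_⟩
    · rw [Ne, amalg_mk_eq_zero]; rintro ⟨h, -⟩; exact hzω z₀ hz₀0 h
    · rw [amalg_mul_mk, amalg_mk_eq_zero]
      exact ⟨by linear_combination ω * hxz₀, by ring⟩
  by_cases hB : x * (x + ω) = 0
  · -- Case B : `x + ω` is a zero divisor killed by `x`
    have hxω_ne : x * ω ≠ 0 := fun h => hx0 (hreg x (by rwa [mul_comm] at h))
    have hxω : x * ω = x := by
      by_contra hne
      have hzd : x * ω ∈ zdSet R := ⟨z₀, hz₀0, by linear_combination ω * hxz₀⟩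
      have h := hxuniv (x*ω) hxω_ne hzd hne
      have hx2 : x * x = 0 := hreg (x*x) (by linear_combination h)
      exact hxω_ne (by linear_combination hB - hx2)
    have hnegx : -x = x := by
      by_contra hne
      have hzd : (-x) ∈ zdSet R := ⟨z₀, hz₀0, by linear_combination -hxz₀⟩
      have h := hxuniv (-x) (by simpa using hx0) hzd hne
      exact hxω_ne (by linear_combination hB + h)
    have hxx : x * x = x := by linear_combination hB - hxω + hnegx
    have h2x : x + x = 0 := by linear_combination -hnegx
    have hkey : (x+ω) * (x + ω*(x+ω)) = x + ω*(ω*ω) := by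
      linear_combination (1+ω)*hxx + (2*ω+4)*hxω + 2*h2x
    have hne2 : x + ω*(ω*ω) ≠ 0 := by
      intro h
      have h3 : ω * (ω * (ω * z₀)) = 0 := by linear_combination z₀ * h - hxz₀
      exact hz₀0 (hreg _ (hreg _ (hreg _ h3)))
    have hxI : x ∈ I := by rw [← hxω]; exact I.mul_mem_left x hωI
    have hf0 : x + ω ≠ 0 := by
      intro h
      exact hz₀0 (hreg z₀ (by linear_combination z₀ * h - hxz₀))
    have memV : ((x + ω, x + ω*(x+ω)) : R × R) ∈ amalg R I := by
      rw [amalg_mem_iff]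
      have h : (x + ω*(x+ω)) - (x + ω) = ω * (x + ω - 1) := by ring
      rw [h]
      exact I.mul_mem_right _ hωI
    have memX : ((x, 0) : R × R) ∈ amalg R I := by
      rw [amalg_mem_iff]; simpa using I.neg_mem hxI
    have hV0 : (⟨(x+ω, x + ω*(x+ω)), memV⟩ : ↥(amalg R I)) ≠ 0 := by
      rw [Ne, amalg_mk_eq_zero]; rintro ⟨h, -⟩; exact hf0 h
    have hVzd : (⟨(x+ω, x + ω*(x+ω)), memV⟩ : ↥(amalg R I)) ∈ zdSet ↥(amalg R I) := by
      refine ⟨⟨(x, 0), memX⟩, ?_, ?_⟩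
      · rw [Ne, amalg_mk_eq_zero]; rintro ⟨h, -⟩; exact hx0 h
      · rw [amalg_mul_mk, amalg_mk_eq_zero]
        exact ⟨by linear_combination hB, by ring⟩
    refine ⟨⟨_, hU0, hUzd⟩, ⟨_, hV0, hVzd⟩, ?_⟩
    apply aux_three_le_edist
    · intro h
      simp only [Subtype.mk.injEq, Prod.mk.injEq] at h
      exact hω0 (by linear_combination -h.1)
    · rintro ⟨-, hmul⟩
      have hmul' : (⟨(x,x+ω),memU⟩ : ↥(amalg R I)) * ⟨(x+ω, x+ω*(x+ω)), memV⟩ = 0 := hmul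
      rw [amalg_mul_mk, amalg_mk_eq_zero] at hmul'
      exact hne2 (by rw [← hkey]; exact hmul'.2)
    · rintro ⟨⟨⟨s,t⟩, hst⟩, hW0, hWzd⟩ ⟨⟨-, hm1⟩, ⟨-, hm2⟩⟩
      have hm1' : (⟨(x,x+ω),memU⟩ : ↥(amalg R I)) * ⟨(s,t),hst⟩ = 0 := hm1
      have hm2' : (⟨(s,t),hst⟩ : ↥(amalg R I)) * ⟨(x+ω, x+ω*(x+ω)), memV⟩ = 0 := hm2
      rw [amalg_mul_mk, amalg_mk_eq_zero] at hm1' hm2'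
      obtain ⟨e1, e2⟩ := hm1'
      obtain ⟨e3, e4⟩ := hm2'
      have hs : s = 0 := hreg s (by linear_combination e3 - e1)
      have hxt : x * t = 0 := by linear_combination e4 - ω * e2
      have ht : t = 0 := hreg t (by linear_combination e2 - hxt)
      exact hW0 (by rw [amalg_mk_eq_zero]; exact ⟨hs, ht⟩)
  · -- Case A : `x * (x + ω) ≠ 0`
    have memV : ((x + ω, x) : R × R) ∈ amalg R I := by
      rw [amalg_mem_iff]; simpa using I.neg_mem hωI
    have hV0 : (⟨(x+ω, x), memV⟩ : ↥(amalg R I)) ≠ 0 := by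
      rw [Ne, amalg_mk_eq_zero]; rintro ⟨-, h⟩; exact hx0 h
    have hVzd : (⟨(x+ω, x), memV⟩ : ↥(amalg R I)) ∈ zdSet ↥(amalg R I) := by
      refine ⟨⟨(0, z₀*ω), memK2⟩, ?_, ?_⟩
      · rw [Ne, amalg_mk_eq_zero]; rintro ⟨-, h⟩; exact hzω z₀ hz₀0 h
      · rw [amalg_mul_mk, amalg_mk_eq_zero]
        exact ⟨by ring, by linear_combination ω * hxz₀⟩
    refine ⟨⟨_, hU0, hUzd⟩, ⟨_, hV0, hVzd⟩, ?_⟩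
    apply aux_three_le_edist
    · intro h
      simp only [Subtype.mk.injEq, Prod.mk.injEq] at h
      exact hω0 (by linear_combination -h.1)
    · rintro ⟨-, hmul⟩
      have hmul' : (⟨(x,x+ω),memU⟩ : ↥(amalg R I)) * ⟨(x+ω, x), memV⟩ = 0 := hmul
      rw [amalg_mul_mk, amalg_mk_eq_zero] at hmul'
      exact hB hmul'.1
    · rintro ⟨⟨⟨s,t⟩, hst⟩, hW0, hWzd⟩ ⟨⟨-, hm1⟩, ⟨-, hm2⟩⟩
      have hm1' : (⟨(x,x+ω),memU⟩ : ↥(amalg R I)) * ⟨(s,t),hst⟩ = 0 := hm1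
      have hm2' : (⟨(s,t),hst⟩ : ↥(amalg R I)) * ⟨(x+ω, x), memV⟩ = 0 := hm2
      rw [amalg_mul_mk, amalg_mk_eq_zero] at hm1' hm2'
      obtain ⟨e1, e2⟩ := hm1'
      obtain ⟨e3, e4⟩ := hm2'
      have hs : s = 0 := hreg s (by linear_combination e3 - e1)
      have ht : t = 0 := hreg t (by linear_combination e2 - e4)
      exact hW0 (by rw [amalg_mk_eq_zero]; exact ⟨hs, ht⟩)

end Main

/-- if `I ⊄ Z(R)` and some vertex of `Γ(R)` is adjacent to every other vertex,
then `diam Γ(R ⋈ I) = 3`. -/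
theorem stmt13 (R : Type*) [CommRing R] [Nontrivial R] (I : Ideal R)
    (hInz : ¬ (I : Set R) ⊆ zdSet R)
    (hx : ∃ x : R, (x ≠ 0 ∧ x ∈ zdSet R) ∧
      ∀ y : R, y ≠ 0 → y ∈ zdSet R → y ≠ x → x * y = 0) :
    (zdGraph ↥(amalg R I)).ediam = 3 := by
  obtain ⟨ω, hωI, hωz⟩ := Set.not_subset.mp hInz
  obtain ⟨x, ⟨hx0, hxzd⟩, hxuniv⟩ := hx
  obtain ⟨z₀, hz₀0, hxz₀⟩ := hxzd
  have hreg : ∀ y : R, ω * y = 0 → y = 0 := by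
    intro y hy
    by_contra hy0
    exact hωz ⟨y, hy0, hy⟩
  refine le_antisymm
    (SimpleGraph.ediam_le_of_edist_le fun U V =>
      aux_upper hωI hreg hx0 hz₀0 hxz₀ hxuniv U V) ?_
  obtain ⟨U, V, h⟩ := aux_lower hωI hreg hx0 hz₀0 hxz₀ hxuniv
  exact le_trans h SimpleGraph.edist_le_ediam
end

section
/- Suppose that Z(R) is an ideal of R, that I ⊆ Z(R), and that for every pair of adjacent vertices a, b of Γ(R) (distinct a, b ∈ Z(R)\{0} with ab = 0) there exists z ≠ 0 with za = zb = 0. If the diameter of Γ(R) equals 2, then the diameter of Γ(R⋈I) equals 2. -/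
private lemma edist_le_two_of_mid {V : Type*} {G : SimpleGraph V} {a b : V} (c : V)
    (h1 : G.Adj a c) (h2 : G.Adj c b) : G.edist a b ≤ 2 := by
  have := SimpleGraph.edist_le
    (SimpleGraph.Walk.cons h1 (SimpleGraph.Walk.cons h2 SimpleGraph.Walk.nil))
  simpa using this

private lemma exists_mid {V : Type*} {G : SimpleGraph V} {x y : V} (h : G.edist x y = 2) :
    ∃ z, G.Adj x z ∧ G.Adj z y := by
  obtain ⟨p, hp⟩ := SimpleGraph.exists_walk_of_edist_eq_coe (k := 2) (by exact_mod_cast h)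
  refine ⟨p.getVert 1, ?_, ?_⟩
  · have h0 := p.adj_getVert_succ (i := 0) (by omega)
    simpa using h0
  · have h1 := p.adj_getVert_succ (i := 1) (by omega)
    have h2 : p.getVert 2 = y := by
      have := p.getVert_length
      rwa [hp] at this
    rwa [h2] at h1

private lemma two_le_of_ne {e : ℕ∞} (h0 : e ≠ 0) (h1 : e ≠ 1) : 2 ≤ e := by
  rcases eq_or_ne e ⊤ with rfl | ht
  · exact le_top
  · obtain ⟨n, rfl⟩ := ENat.ne_top_iff_exists.mp ht
    have hn0 : n ≠ 0 := by simpa using h0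
    have hn1 : n ≠ 1 := by simpa using h1
    have h2 := (Nat.cast_le (α := ℕ∞)).mpr (show 2 ≤ n by omega)
    simpa using h2

/-- suppose `Z(R)` is an ideal, `I ⊆ Z(R)`, and every pair of adjacent vertices
of `Γ(R)` has a common nonzero annihilator. If `diam Γ(R) = 2`, then `diam Γ(R ⋈ I) = 2`. -/
theorem stmt16 (R : Type*) [CommRing R] [Nontrivial R] (I : Ideal R)
    (hZ : ∃ J : Ideal R, (J : Set R) = zdSet R)
    (hIZ : (I : Set R) ⊆ zdSet R)
    (hann : ∀ a b : R, a ≠ 0 → b ≠ 0 → a ≠ b → a * b = 0 →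
      ∃ z : R, z ≠ 0 ∧ z * a = 0 ∧ z * b = 0)
    (hdiam : (zdGraph R).ediam = 2) :
    (zdGraph ↥(amalg R I)).ediam = 2 := by
  classical
  obtain ⟨J, hJ⟩ := hZ
  have hJmem : ∀ x : R, x ∈ zdSet R ↔ x ∈ J := by
    intro x
    rw [← hJ]
    rfl
  -- Lemma A: two nonzero zero-divisors with nonzero product have a common annihilator
  have lemA : ∀ r u : R, r ∈ zdSet R → u ∈ zdSet R → r * u ≠ 0 →
      ∃ e : R, e ≠ 0 ∧ e * r = 0 ∧ e * u = 0 := by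
    intro r u hr hu hru
    have hr0 : r ≠ 0 := by rintro rfl; exact hru (zero_mul u)
    have hu0 : u ≠ 0 := by rintro rfl; exact hru (mul_zero r)
    by_cases hequ : r = u
    · obtain ⟨y, hy0, hy⟩ := hr
      refine ⟨y, hy0, by rw [mul_comm]; exact hy, ?_⟩
      rw [mul_comm, ← hequ]; exact hy
    · set vr : {x : R // x ≠ 0 ∧ x ∈ zdSet R} := ⟨r, hr0, hr⟩ with hvr
      set vu : {x : R // x ≠ 0 ∧ x ∈ zdSet R} := ⟨u, hu0, hu⟩ with hvu
      have hle : (zdGraph R).edist vr vu ≤ 2 := by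
        rw [← hdiam]; exact SimpleGraph.edist_le_ediam
      have h0 : (zdGraph R).edist vr vu ≠ 0 := by
        intro h
        exact hequ (congrArg Subtype.val (SimpleGraph.edist_eq_zero_iff.mp h))
      have h1 : (zdGraph R).edist vr vu ≠ 1 := by
        intro h
        obtain ⟨-, hmul⟩ := SimpleGraph.edist_eq_one_iff_adj.mp h
        exact hru hmul
      have h2 : (zdGraph R).edist vr vu = 2 := le_antisymm hle (two_le_of_ne h0 h1)
      obtain ⟨z, hz1, hz2⟩ := exists_mid h2
      exact ⟨z.1, z.2.1, by rw [mul_comm]; exact hz1.2, hz2.2⟩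
  -- both components of a zero-divisor of the amalgamation are zero-divisors of R
  have hIstep : ∀ a b : R, b - a ∈ I → a ∈ zdSet R → b ∈ zdSet R := by
    intro a b hab ha
    rw [hJmem] at ha ⊢
    have h1 : b - a ∈ J := by rw [← hJmem]; exact hIZ hab
    have hb : b = (b - a) + a := by ring
    rw [hb]; exact J.add_mem h1 ha
  have memZ : ∀ p : ↥(amalg R I), p ∈ zdSet ↥(amalg R I) →
      (p : R × R).1 ∈ zdSet R ∧ (p : R × R).2 ∈ zdSet R := by
    intro p hp
    obtain ⟨q, hq0, hpq⟩ := hp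
    have hmul : (p : R × R).1 * (q : R × R).1 = 0 ∧ (p : R × R).2 * (q : R × R).2 = 0 := by
      have h := congrArg Subtype.val hpq
      have h1 : ((p : R × R).1 * (q : R × R).1, (p : R × R).2 * (q : R × R).2)
          = ((0 : R), (0 : R)) := h
      exact ⟨congrArg Prod.fst h1, congrArg Prod.snd h1⟩
    have hq0' : (q : R × R).1 ≠ 0 ∨ (q : R × R).2 ≠ 0 := by
      by_contra hc
      push_neg at hc
      exact hq0 (Subtype.ext (Prod.ext hc.1 hc.2))
    have hpI : (p : R × R).2 - (p : R × R).1 ∈ I := p.2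
    rcases hq0' with h | h
    · have h1 : (p : R × R).1 ∈ zdSet R := ⟨_, h, hmul.1⟩
      exact ⟨h1, hIstep _ _ hpI h1⟩
    · have h2 : (p : R × R).2 ∈ zdSet R := ⟨_, h, hmul.2⟩
      refine ⟨hIstep _ _ ?_ h2, h2⟩
      have : (p : R × R).1 - (p : R × R).2 = -((p : R × R).2 - (p : R × R).1) := by ring
      rw [this]; exact I.neg_mem hpI
  -- key step: any two vertices of the amalgamated graph with nonzero product
  -- admit a common neighbour
  have key : ∀ P Q : {x : ↥(amalg R I) // x ≠ 0 ∧ x ∈ zdSet ↥(amalg R I)},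
      (P : ↥(amalg R I)) * (Q : ↥(amalg R I)) ≠ 0 →
      ∃ W, (zdGraph ↥(amalg R I)).Adj P W ∧ (zdGraph ↥(amalg R I)).Adj W Q := by
    rintro ⟨⟨⟨r, s⟩, hiP⟩, hP0, hPz⟩ ⟨⟨⟨u, v⟩, hiQ⟩, hQ0, hQz⟩ hPQ
    set pp : ↥(amalg R I) := ⟨(r, s), hiP⟩ with hpp
    set qq : ↥(amalg R I) := ⟨(u, v), hiQ⟩ with hqq
    have hi : s - r ∈ I := hiP
    have hj : v - u ∈ I := hiQ
    -- generic construction of the middle vertex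
    have build : ∀ w : ↥(amalg R I), w ≠ 0 → w * pp = 0 → w * qq = 0 →
        ∃ W, (zdGraph ↥(amalg R I)).Adj ⟨pp, hP0, hPz⟩ W ∧
          (zdGraph ↥(amalg R I)).Adj W ⟨qq, hQ0, hQz⟩ := by
      intro w hw0 hwp hwq
      have hwz : w ∈ zdSet ↥(amalg R I) := ⟨pp, hP0, hwp⟩
      refine ⟨⟨w, hw0, hwz⟩, ⟨?_, ?_⟩, ?_, ?_⟩
      · intro h
        apply hPQ
        have hpw : pp = w := congrArg Subtype.val h
        show pp * qq = 0
        rw [hpw]; exact hwq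
      · show pp * w = 0
        rw [mul_comm]; exact hwp
      · intro h
        apply hPQ
        have hwq' : w = qq := congrArg Subtype.val h
        show pp * qq = 0
        rw [← hwq', mul_comm]; exact hwp
      · exact hwq
    -- the product of the two vertices is nonzero in some component
    have hor : r * u ≠ 0 ∨ s * v ≠ 0 := by
      by_contra hc
      push_neg at hc
      exact hPQ (Subtype.ext (Prod.ext hc.1 hc.2))
    have hrs : r ∈ zdSet R ∧ s ∈ zdSet R := memZ pp hPz
    have huv : u ∈ zdSet R ∧ v ∈ zdSet R := memZ qq hQz
    rcases hor with hru | hsv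
    · -- first components have nonzero product
      obtain ⟨e, he0, her, heu⟩ := lemA r u hrs.1 huv.1 hru
      by_cases hes : e * s = 0
      · by_cases hev : e * v = 0
        · -- w = (e, e)
          have hmem : ((e, e) : R × R) ∈ amalg R I := by
            show e - e ∈ I; simp
          refine build ⟨(e, e), hmem⟩ ?_ ?_ ?_
          · intro h
            exact he0 (congrArg (fun t => (Subtype.val t).1) h)
          · exact Subtype.ext (Prod.ext her hes)
          · exact Subtype.ext (Prod.ext heu hev)
        · -- w = (e*v, 0)
          have hmem : ((e * v, 0) : R × R) ∈ amalg R I := by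
            show (0 : R) - e * v ∈ I
            have hm : (0 : R) - e * v = (-e) * (v - u) := by linear_combination -heu
            rw [hm]; exact I.mul_mem_left _ hj
          refine build ⟨(e * v, 0), hmem⟩ ?_ ?_ ?_
          · intro h
            exact hev (congrArg (fun t => (Subtype.val t).1) h)
          · refine Subtype.ext (Prod.ext ?_ (zero_mul s))
            show (e * v) * r = 0
            linear_combination v * her
          · refine Subtype.ext (Prod.ext ?_ (zero_mul v))
            show (e * v) * u = 0
            linear_combination v * heu
      · -- w = (e*s, 0)
        have hmem : ((e * s, 0) : R × R) ∈ amalg R I := by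
          show (0 : R) - e * s ∈ I
          have hm : (0 : R) - e * s = (-e) * (s - r) := by linear_combination -her
          rw [hm]; exact I.mul_mem_left _ hi
        refine build ⟨(e * s, 0), hmem⟩ ?_ ?_ ?_
        · intro h
          exact hes (congrArg (fun t => (Subtype.val t).1) h)
        · refine Subtype.ext (Prod.ext ?_ (zero_mul s))
          show (e * s) * r = 0
          linear_combination s * her
        · refine Subtype.ext (Prod.ext ?_ (zero_mul v))
          show (e * s) * u = 0
          linear_combination s * heu
    · -- second components have nonzero product
      obtain ⟨f, hf0, hfs, hfv⟩ := lemA s v hrs.2 huv.2 hsv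
      by_cases hfr : f * r = 0
      · by_cases hfu : f * u = 0
        · -- w = (f, f)
          have hmem : ((f, f) : R × R) ∈ amalg R I := by
            show f - f ∈ I; simp
          refine build ⟨(f, f), hmem⟩ ?_ ?_ ?_
          · intro h
            exact hf0 (congrArg (fun t => (Subtype.val t).1) h)
          · exact Subtype.ext (Prod.ext hfr hfs)
          · exact Subtype.ext (Prod.ext hfu hfv)
        · -- w = (0, f*u)
          have hmem : ((0, f * u) : R × R) ∈ amalg R I := by
            show f * u - 0 ∈ I
            have hm : f * u - 0 = (-f) * (v - u) := by linear_combination hfv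
            rw [hm]; exact I.mul_mem_left _ hj
          refine build ⟨(0, f * u), hmem⟩ ?_ ?_ ?_
          · intro h
            exact hfu (congrArg (fun t => (Subtype.val t).2) h)
          · refine Subtype.ext (Prod.ext (zero_mul r) ?_)
            show (f * u) * s = 0
            linear_combination u * hfs
          · refine Subtype.ext (Prod.ext (zero_mul u) ?_)
            show (f * u) * v = 0
            linear_combination u * hfv
      · -- w = (0, f*r)
        have hmem : ((0, f * r) : R × R) ∈ amalg R I := by
          show f * r - 0 ∈ I
          have hm : f * r - 0 = (-f) * (s - r) := by linear_combination hfs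
          rw [hm]; exact I.mul_mem_left _ hi
        refine build ⟨(0, f * r), hmem⟩ ?_ ?_ ?_
        · intro h
          exact hfr (congrArg (fun t => (Subtype.val t).2) h)
        · refine Subtype.ext (Prod.ext (zero_mul r) ?_)
          show (f * r) * s = 0
          linear_combination r * hfs
        · refine Subtype.ext (Prod.ext (zero_mul u) ?_)
          show (f * r) * v = 0
          linear_combination r * hfv
  -- upper bound
  have upper : (zdGraph ↥(amalg R I)).ediam ≤ 2 := by
    apply SimpleGraph.ediam_le_of_edist_le
    intro P Q
    by_cases hpq : P = Q
    · subst hpq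
      simp [SimpleGraph.edist_self]
    by_cases hadj : (zdGraph ↥(amalg R I)).Adj P Q
    · rw [SimpleGraph.edist_eq_one_iff_adj.mpr hadj]
      exact one_le_two
    · have hmm : (P : ↥(amalg R I)) * (Q : ↥(amalg R I)) ≠ 0 := by
        intro h
        exact hadj ⟨hpq, h⟩
      obtain ⟨W, h1, h2⟩ := key P Q hmm
      exact edist_le_two_of_mid W h1 h2
  -- lower bound
  have lower : (2 : ℕ∞) ≤ (zdGraph ↥(amalg R I)).ediam := by
    have hex : ∃ x y : {x : R // x ≠ 0 ∧ x ∈ zdSet R}, x ≠ y ∧ (x : R) * (y : R) ≠ 0 := by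
      by_contra hc
      push_neg at hc
      have hle1 : (zdGraph R).ediam ≤ 1 := by
        apply SimpleGraph.ediam_le_of_edist_le
        intro x y
        by_cases h : x = y
        · subst h; simp [SimpleGraph.edist_self]
        · have hadj : (zdGraph R).Adj x y := ⟨h, hc x y h⟩
          rw [SimpleGraph.edist_eq_one_iff_adj.mpr hadj]
      rw [hdiam] at hle1
      have : (2 : ℕ) ≤ 1 := by exact_mod_cast hle1
      omega
    obtain ⟨x, y, hxy, hne⟩ := hex
    have hmemx : (((x : R), (x : R)) : R × R) ∈ amalg R I := by
      show (x : R) - (x : R) ∈ I; simp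
    have hmemy : (((y : R), (y : R)) : R × R) ∈ amalg R I := by
      show (y : R) - (y : R) ∈ I; simp
    set px : ↥(amalg R I) := ⟨((x : R), (x : R)), hmemx⟩ with hpx
    set py : ↥(amalg R I) := ⟨((y : R), (y : R)), hmemy⟩ with hpy
    have hdiagz : ∀ (a : R) (ha : ((a, a) : R × R) ∈ amalg R I), a ∈ zdSet R →
        (⟨(a, a), ha⟩ : ↥(amalg R I)) ∈ zdSet ↥(amalg R I) := by
      intro a ha haz
      obtain ⟨b, hb0, hab⟩ := haz
      have hmemb : ((b, b) : R × R) ∈ amalg R I := by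
        show b - b ∈ I; simp
      refine ⟨⟨(b, b), hmemb⟩, ?_, ?_⟩
      · intro h
        exact hb0 (congrArg (fun t => (Subtype.val t).1) h)
      · exact Subtype.ext (Prod.ext hab hab)
    have hpx0 : px ≠ 0 := by
      intro h
      exact x.2.1 (congrArg (fun t => (Subtype.val t).1) h)
    have hpy0 : py ≠ 0 := by
      intro h
      exact y.2.1 (congrArg (fun t => (Subtype.val t).1) h)
    set VX : {w : ↥(amalg R I) // w ≠ 0 ∧ w ∈ zdSet ↥(amalg R I)} :=
      ⟨px, hpx0, hdiagz _ hmemx x.2.2⟩ with hVX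
    set VY : {w : ↥(amalg R I) // w ≠ 0 ∧ w ∈ zdSet ↥(amalg R I)} :=
      ⟨py, hpy0, hdiagz _ hmemy y.2.2⟩ with hVY
    have hVne : VX ≠ VY := by
      intro h
      apply hxy
      apply Subtype.ext
      exact congrArg (fun t => ((Subtype.val t : ↥(amalg R I)) : R × R).1) h
    have hVnadj : ¬ (zdGraph ↥(amalg R I)).Adj VX VY := by
      rintro ⟨-, hm⟩
      apply hne
      exact congrArg (fun t => (Subtype.val t).1) hm
    have h0 : (zdGraph ↥(amalg R I)).edist VX VY ≠ 0 := by
      intro h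
      exact hVne (SimpleGraph.edist_eq_zero_iff.mp h)
    have h1 : (zdGraph ↥(amalg R I)).edist VX VY ≠ 1 := by
      intro h
      exact hVnadj (SimpleGraph.edist_eq_one_iff_adj.mp h)
    exact le_trans (two_le_of_ne h0 h1) SimpleGraph.edist_le_ediam
  exact le_antisymm upper lower
end

section
/- Suppose that R is not reduced (R has a nonzero nilpotent element), that Z(R) is an ideal of R, and that I ⊆ Z(R). If the diameter of Γ(R) equals 2, then the diameter of Γ(R⋈I) equals 2. -/
open SimpleGraph

private lemma two_le_of_ne_enat {n : ℕ∞} (h0 : n ≠ 0) (h1 : n ≠ 1) : 2 ≤ n := by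
  cases n with
  | top => exact le_top
  | coe m =>
    have h0' : m ≠ 0 := by simpa using h0
    have h1' : m ≠ 1 := by simpa using h1
    exact_mod_cast (by omega : 2 ≤ m)

/-- If `diam Γ(R) ≤ 2`, two distinct nonzero zero-divisors with nonzero product have a
common nonzero annihilator (the middle vertex of a path of length 2). -/
private lemma zd_path2 {R : Type*} [CommRing R]
    (hdiam : (zdGraph R).ediam ≤ 2) {a c : R}
    (ha : a ≠ 0 ∧ a ∈ zdSet R) (hc : c ≠ 0 ∧ c ∈ zdSet R)
    (hne : a ≠ c) (hmul : a * c ≠ 0) :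
    ∃ e : R, e ≠ 0 ∧ e * a = 0 ∧ e * c = 0 := by
  let u : {x : R // x ≠ 0 ∧ x ∈ zdSet R} := ⟨a, ha⟩
  let v : {x : R // x ≠ 0 ∧ x ∈ zdSet R} := ⟨c, hc⟩
  have huv : u ≠ v := fun h => hne (congrArg Subtype.val h)
  have hnadj : ¬ (zdGraph R).Adj u v := by rintro ⟨-, h2⟩; exact hmul h2
  have hle : (zdGraph R).edist u v ≤ 2 := le_trans edist_le_ediam hdiam
  have h0 : (zdGraph R).edist u v ≠ 0 := fun h => huv (edist_eq_zero_iff.mp h)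
  have h1 : (zdGraph R).edist u v ≠ 1 := fun h => hnadj (edist_eq_one_iff_adj.mp h)
  have heq : (zdGraph R).edist u v = ((2 : ℕ) : ℕ∞) := by
    exact_mod_cast le_antisymm hle (two_le_of_ne_enat h0 h1)
  obtain ⟨p, hp⟩ := exists_walk_of_edist_eq_coe heq
  have h01 := p.adj_getVert_succ (i := 0) (by omega)
  have h12 := p.adj_getVert_succ (i := 1) (by omega)
  rw [p.getVert_zero] at h01
  have h2v : p.getVert 2 = v := by have := p.getVert_length; rwa [hp] at this
  rw [h2v] at h12
  refine ⟨(p.getVert 1 : R), (p.getVert 1).2.1, ?_, h12.2⟩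
  have := h01.2
  rwa [mul_comm] at this

/-- If `Z(R)` is an ideal and `diam Γ(R) ≤ 2`, any two zero-divisors (possibly zero, possibly
equal) have a common nonzero annihilator. -/
private lemma common_ann {R : Type*} [CommRing R] [Nontrivial R]
    (hZ : ∃ J : Ideal R, (J : Set R) = zdSet R)
    (hdiam : (zdGraph R).ediam ≤ 2) {a c : R}
    (ha : a ∈ zdSet R) (hc : c ∈ zdSet R) :
    ∃ e : R, e ≠ 0 ∧ e * a = 0 ∧ e * c = 0 := by
  obtain ⟨J, hJ⟩ := hZ
  by_cases ha0 : a = 0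
  · by_cases hc0 : c = 0
    · obtain ⟨e, he⟩ := exists_ne (0 : R)
      exact ⟨e, he, by rw [ha0, mul_zero], by rw [hc0, mul_zero]⟩
    · obtain ⟨y, hy0, hyc⟩ := hc
      exact ⟨y, hy0, by rw [ha0, mul_zero], by rw [mul_comm]; exact hyc⟩
  by_cases hc0 : c = 0
  · obtain ⟨y, hy0, hya⟩ := ha
    exact ⟨y, hy0, by rw [mul_comm]; exact hya, by rw [hc0, mul_zero]⟩
  by_cases hac : a = c
  · obtain ⟨y, hy0, hya⟩ := ha
    exact ⟨y, hy0, by rw [mul_comm]; exact hya, by rw [← hac, mul_comm]; exact hya⟩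
  by_cases hm : a * c = 0
  · by_cases haa : a * a = 0
    · exact ⟨a, ha0, haa, hm⟩
    by_cases hcc : c * c = 0
    · exact ⟨c, hc0, by rw [mul_comm]; exact hm, hcc⟩
    by_cases hsum : a + c = 0
    · obtain ⟨y, hy0, hya⟩ := ha
      refine ⟨y, hy0, by rw [mul_comm]; exact hya, ?_⟩
      have hc' : c = -a := (neg_eq_of_add_eq_zero_right hsum).symm
      rw [hc', mul_neg, neg_eq_zero, mul_comm]; exact hya
    · have hsz : a + c ∈ zdSet R := by
        rw [← hJ] at ha hc ⊢
        exact J.add_mem ha hc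
      have hne2 : a ≠ a + c := fun h => hc0 (left_eq_add.mp h)
      have hmul2 : a * (a + c) ≠ 0 := by rw [mul_add, hm, add_zero]; exact haa
      obtain ⟨e, he0, hea, heac⟩ := zd_path2 hdiam ⟨ha0, ha⟩ ⟨hsum, hsz⟩ hne2 hmul2
      refine ⟨e, he0, hea, ?_⟩
      have h' : e * (a + c) = e * a + e * c := mul_add e a c
      rw [heac, hea, zero_add] at h'
      exact h'.symm
  · exact zd_path2 hdiam ⟨ha0, ha⟩ ⟨hc0, hc⟩ hac hm

/-- Both coordinates of a zero-divisor of `R ⋈ I` are zero-divisors of `R`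
(when `Z(R)` is an ideal containing `I`). -/
private lemma coord_zd {R : Type*} [CommRing R] (I : Ideal R)
    (hZ : ∃ J : Ideal R, (J : Set R) = zdSet R)
    (hIZ : (I : Set R) ⊆ zdSet R)
    {x : ↥(amalg R I)} (hx : x ∈ zdSet ↥(amalg R I)) :
    ((x : R × R).1 ∈ zdSet R) ∧ ((x : R × R).2 ∈ zdSet R) := by
  obtain ⟨J, hJ⟩ := hZ
  obtain ⟨y, hy0, hxy⟩ := hx
  have hxyv : ((x : R × R) * (y : R × R)) = (0 : R × R) := by
    have : ((x * y : ↥(amalg R I)) : R × R) = ((0 : ↥(amalg R I)) : R × R) := by rw [hxy]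
    exact this
  have h1 : (x : R × R).1 * (y : R × R).1 = 0 := congrArg Prod.fst hxyv
  have h2 : (x : R × R).2 * (y : R × R).2 = 0 := congrArg Prod.snd hxyv
  have hxI : (x : R × R).2 - (x : R × R).1 ∈ I := x.prop
  have hxI' : (x : R × R).2 - (x : R × R).1 ∈ J := by
    rw [← SetLike.mem_coe, hJ]; exact hIZ hxI
  by_cases hy1 : (y : R × R).1 = 0
  · have hy2 : (y : R × R).2 ≠ 0 := by
      intro h
      exact hy0 (Subtype.ext (Prod.ext hy1 h))
    have h2' : (x : R × R).2 ∈ zdSet R := ⟨_, hy2, h2⟩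
    have hmem : (x : R × R).2 ∈ J := by rw [← SetLike.mem_coe, hJ]; exact h2'
    have h1' : (x : R × R).1 ∈ J := by
      have := J.sub_mem hmem hxI'
      simpa using this
    refine ⟨?_, h2'⟩
    rw [← hJ]; exact h1'
  · have h1' : (x : R × R).1 ∈ zdSet R := ⟨_, hy1, h1⟩
    have hm1 : (x : R × R).1 ∈ J := by rw [← SetLike.mem_coe, hJ]; exact h1'
    have h2' : (x : R × R).2 ∈ J := by
      have := J.add_mem hm1 hxI'
      simpa using this
    refine ⟨h1', ?_⟩
    rw [← hJ]; exact h2'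

/-- if `R` is not reduced, `Z(R)` is an ideal, `I ⊆ Z(R)`,
and `diam Γ(R) = 2`, then `diam Γ(R ⋈ I) = 2`. -/
theorem stmt17 (R : Type*) [CommRing R] [Nontrivial R] (I : Ideal R)
    (hred : ¬ IsReduced R)
    (hZ : ∃ J : Ideal R, (J : Set R) = zdSet R)
    (hIZ : (I : Set R) ⊆ zdSet R)
    (hdiam : (zdGraph R).ediam = 2) :
    (zdGraph ↥(amalg R I)).ediam = 2 := by
  have hdle : (zdGraph R).ediam ≤ 2 := le_of_eq hdiam
  refine le_antisymm ?_ ?_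
  · -- upper bound: every pair of vertices of Γ(R ⋈ I) is within distance 2
    apply ediam_le_of_edist_le
    intro x y
    by_cases hxy : x = y
    · rw [hxy, edist_self]; exact zero_le
    by_cases hadj : (zdGraph ↥(amalg R I)).Adj x y
    · rw [edist_eq_one_iff_adj.mpr hadj]; exact one_le_two
    have hprod : ((x : ↥(amalg R I)) : R × R) * ((y : ↥(amalg R I)) : R × R) ≠ 0 := by
      intro h
      exact hadj ⟨hxy, Subtype.ext h⟩
    -- notation for the coordinates
    set X : R × R := ((x : ↥(amalg R I)) : R × R) with hX
    set Y : R × R := ((y : ↥(amalg R I)) : R × R) with hY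
    have hXI : X.2 - X.1 ∈ I := (x : ↥(amalg R I)).prop
    have hYI : Y.2 - Y.1 ∈ I := (y : ↥(amalg R I)).prop
    obtain ⟨hX1, hX2⟩ := coord_zd I hZ hIZ x.prop.2
    obtain ⟨hY1, hY2⟩ := coord_zd I hZ hIZ y.prop.2
    -- common annihilator of the first coordinates
    obtain ⟨e, he0, hea, hec⟩ := common_ann hZ hdle hX1 hY1
    -- given a suitable common neighbor, conclude
    have key : ∀ (zv : R × R) (hzm : zv ∈ amalg R I), zv ≠ 0 →
        zv.1 * X.1 = 0 → zv.2 * X.2 = 0 → zv.1 * Y.1 = 0 → zv.2 * Y.2 = 0 →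
        (zdGraph ↥(amalg R I)).edist x y ≤ 2 := by
      intro zv hzm hz0 hzx1 hzx2 hzy1 hzy2
      have hzx : (⟨zv, hzm⟩ : ↥(amalg R I)) * (x : ↥(amalg R I)) = 0 := by
        apply Subtype.ext
        exact Prod.ext hzx1 hzx2
      have hzy : (⟨zv, hzm⟩ : ↥(amalg R I)) * (y : ↥(amalg R I)) = 0 := by
        apply Subtype.ext
        exact Prod.ext hzy1 hzy2
      have hzA0 : (⟨zv, hzm⟩ : ↥(amalg R I)) ≠ 0 := fun h => hz0 (congrArg Subtype.val h)
      have hzzd : (⟨zv, hzm⟩ : ↥(amalg R I)) ∈ zdSet ↥(amalg R I) := by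
        refine ⟨(x : ↥(amalg R I)), ?_, hzx⟩
        exact x.prop.1
      let z : {p : ↥(amalg R I) // p ≠ 0 ∧ p ∈ zdSet ↥(amalg R I)} := ⟨⟨zv, hzm⟩, hzA0, hzzd⟩
      have hxz : (zdGraph ↥(amalg R I)).Adj x z := by
        refine ⟨?_, by rw [mul_comm]; exact hzx⟩
        intro h
        apply hprod
        have : (x : ↥(amalg R I)) * (y : ↥(amalg R I)) = 0 := by
          rw [show (x : ↥(amalg R I)) = (⟨zv, hzm⟩ : ↥(amalg R I)) from congrArg Subtype.val h]
          exact hzy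
        exact congrArg Subtype.val this
      have hzy' : (zdGraph ↥(amalg R I)).Adj z y := by
        refine ⟨?_, hzy⟩
        intro h
        apply hprod
        have : (x : ↥(amalg R I)) * (y : ↥(amalg R I)) = 0 := by
          rw [mul_comm, show (y : ↥(amalg R I)) = (⟨zv, hzm⟩ : ↥(amalg R I)) from
            congrArg Subtype.val h.symm]
          exact hzx
        exact congrArg Subtype.val this
      calc (zdGraph ↥(amalg R I)).edist x y
          ≤ (zdGraph ↥(amalg R I)).edist x z + (zdGraph ↥(amalg R I)).edist z y :=
            SimpleGraph.edist_triangle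
        _ = 2 := by
            rw [edist_eq_one_iff_adj.mpr hxz, edist_eq_one_iff_adj.mpr hzy']
            norm_num
    by_cases hu : e * (X.2 - X.1) ≠ 0
    · refine key (e * (X.2 - X.1), 0) ?_ ?_ ?_ (zero_mul _) ?_ (zero_mul _)
      · show (0 : R) - e * (X.2 - X.1) ∈ I
        rw [zero_sub]
        exact I.neg_mem (I.mul_mem_left e hXI)
      · intro h
        exact hu (congrArg Prod.fst h)
      · show e * (X.2 - X.1) * X.1 = 0
        have h' : e * (X.2 - X.1) * X.1 = (X.2 - X.1) * (e * X.1) := by ring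
        rw [h', hea, mul_zero]
      · show e * (X.2 - X.1) * Y.1 = 0
        have h' : e * (X.2 - X.1) * Y.1 = (X.2 - X.1) * (e * Y.1) := by ring
        rw [h', hec, mul_zero]
    push_neg at hu
    by_cases hv : e * (Y.2 - Y.1) ≠ 0
    · refine key (e * (Y.2 - Y.1), 0) ?_ ?_ ?_ (zero_mul _) ?_ (zero_mul _)
      · show (0 : R) - e * (Y.2 - Y.1) ∈ I
        rw [zero_sub]
        exact I.neg_mem (I.mul_mem_left e hYI)
      · intro h
        exact hv (congrArg Prod.fst h)
      · show e * (Y.2 - Y.1) * X.1 = 0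
        have h' : e * (Y.2 - Y.1) * X.1 = (Y.2 - Y.1) * (e * X.1) := by ring
        rw [h', hea, mul_zero]
      · show e * (Y.2 - Y.1) * Y.1 = 0
        have h' : e * (Y.2 - Y.1) * Y.1 = (Y.2 - Y.1) * (e * Y.1) := by ring
        rw [h', hec, mul_zero]
    push_neg at hv
    · refine key (e, e) ?_ ?_ hea ?_ hec ?_
      · show e - e ∈ I
        rw [sub_self]; exact I.zero_mem
      · intro h
        exact he0 (congrArg Prod.fst h)
      · show e * X.2 = 0
        have h' : e * X.2 = e * X.1 + e * (X.2 - X.1) := by ring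
        rw [h', hea, hu, add_zero]
      · show e * Y.2 = 0
        have h' : e * Y.2 = e * Y.1 + e * (Y.2 - Y.1) := by ring
        rw [h', hec, hv, add_zero]
  · -- lower bound: there exist two vertices at distance ≥ 2
    have h2 : ¬ (zdGraph R).ediam ≤ 1 := by
      rw [hdiam]; norm_num
    have hpair : ∃ u v, ¬ (zdGraph R).edist u v ≤ 1 := by
      by_contra hcon
      push_neg at hcon
      exact h2 (ediam_le_of_edist_le hcon)
    obtain ⟨u, v, huv⟩ := hpair
    have hne : u ≠ v := by
      intro h
      exact huv (by rw [h, SimpleGraph.edist_self]; exact zero_le)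
    have hnadj : ¬ (zdGraph R).Adj u v := fun h =>
      huv (le_of_eq (edist_eq_one_iff_adj.mpr h))
    have hm : (u : R) * (v : R) ≠ 0 := fun h => hnadj ⟨hne, h⟩
    -- lift u and v to the diagonal of R ⋈ I
    have hdiag : ∀ t : R, ((t, t) : R × R) ∈ amalg R I := by
      intro t
      show t - t ∈ I
      rw [sub_self]; exact I.zero_mem
    have hlift : ∀ w : {x : R // x ≠ 0 ∧ x ∈ zdSet R},
        (⟨((w : R), (w : R)), hdiag _⟩ : ↥(amalg R I)) ≠ 0 ∧
        (⟨((w : R), (w : R)), hdiag _⟩ : ↥(amalg R I)) ∈ zdSet ↥(amalg R I) := by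
      intro w
      constructor
      · intro h
        exact w.prop.1 (congrArg Prod.fst (congrArg Subtype.val h))
      · obtain ⟨s, hs0, hws⟩ := w.prop.2
        refine ⟨⟨(s, s), hdiag s⟩, ?_, ?_⟩
        · intro h
          exact hs0 (congrArg Prod.fst (congrArg Subtype.val h))
        · apply Subtype.ext
          exact Prod.ext hws hws
    let U : {p : ↥(amalg R I) // p ≠ 0 ∧ p ∈ zdSet ↥(amalg R I)} :=
      ⟨⟨((u : R), (u : R)), hdiag _⟩, hlift u⟩
    let V : {p : ↥(amalg R I) // p ≠ 0 ∧ p ∈ zdSet ↥(amalg R I)} :=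
      ⟨⟨((v : R), (v : R)), hdiag _⟩, hlift v⟩
    have hUV : U ≠ V := by
      intro h
      apply hne
      apply Subtype.ext
      have h1 := congrArg Subtype.val h
      have h2 := congrArg Subtype.val h1
      exact congrArg Prod.fst h2
    have hUVnadj : ¬ (zdGraph ↥(amalg R I)).Adj U V := by
      rintro ⟨-, hp⟩
      apply hm
      exact congrArg (fun t : R × R => t.1) (congrArg Subtype.val hp)
    have h0 : (zdGraph ↥(amalg R I)).edist U V ≠ 0 := fun h => hUV (edist_eq_zero_iff.mp h)
    have h1 : (zdGraph ↥(amalg R I)).edist U V ≠ 1 :=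
      fun h => hUVnadj (edist_eq_one_iff_adj.mp h)
    exact le_trans (two_le_of_ne_enat h0 h1) edist_le_ediam
end

section
/- If I ⊄ Z(R) and the diameter of the zero-divisor graph Γ(R⋈I) equals 2, then for every y ∈ Z(R)\{0} there exists a nonzero element of I annihilating y, i.e. Ann_R(y) ∩ I ≠ {0}. -/
/-- if `I ⊄ Z(R)` and `diam Γ(R ⋈ I) = 2`, then every nonzero zero-divisor of `R`
is annihilated by a nonzero element of `I`. -/
theorem stmt18 (R : Type*) [CommRing R] [Nontrivial R] (I : Ideal R)
    (hInz : ¬ (I : Set R) ⊆ zdSet R)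
    (hdiam : (zdGraph ↥(amalg R I)).ediam = 2) :
    ∀ y : R, y ≠ 0 → y ∈ zdSet R → ∃ j ∈ I, j ≠ 0 ∧ j * y = 0 := by
  -- obtain a regular element r ∈ I
  rw [Set.not_subset] at hInz
  obtain ⟨r, hrI, hrreg⟩ := hInz
  have hr0 : r ≠ 0 := by
    rintro rfl
    exact hrreg ⟨1, one_ne_zero, by ring⟩
  have hreg : ∀ z : R, r * z = 0 → z = 0 := by
    intro z hz
    by_contra hz0
    exact hrreg ⟨z, hz0, hz⟩
  intro y hy hyzd
  obtain ⟨z, hz0, hyz⟩ := hyzd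
  -- elements of the amalgamation
  have hmemA : ((y, y) : R × R) ∈ amalg R I := by
    show y - y ∈ I; simp
  have hmemZ : ((z, z) : R × R) ∈ amalg R I := by
    show z - z ∈ I; simp
  have hmemB : ((0, r) : R × R) ∈ amalg R I := by
    show r - (0:R) ∈ I; simpa using hrI
  have hmemC : ((r, 0) : R × R) ∈ amalg R I := by
    show (0:R) - r ∈ I; simpa using I.neg_mem hrI
  set A : ↥(amalg R I) := ⟨(y, y), hmemA⟩ with hA
  set B : ↥(amalg R I) := ⟨(0, r), hmemB⟩ with hB
  have hAne : A ≠ 0 := by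
    intro h
    apply hy
    have := congrArg (fun x : ↥(amalg R I) => (x : R × R).1) h
    simpa [hA] using this
  have hBne : B ≠ 0 := by
    intro h
    apply hr0
    have := congrArg (fun x : ↥(amalg R I) => (x : R × R).2) h
    simpa [hB] using this
  have hAzd : A ∈ zdSet ↥(amalg R I) := by
    refine ⟨⟨(z, z), hmemZ⟩, ?_, ?_⟩
    · intro h
      apply hz0
      have := congrArg (fun x : ↥(amalg R I) => (x : R × R).1) h
      simpa using this
    · apply Subtype.ext
      show ((y, y) : R × R) * (z, z) = 0
      simp [Prod.ext_iff, hyz]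
  have hBzd : B ∈ zdSet ↥(amalg R I) := by
    refine ⟨⟨(r, 0), hmemC⟩, ?_, ?_⟩
    · intro h
      apply hr0
      have := congrArg (fun x : ↥(amalg R I) => (x : R × R).1) h
      simpa using this
    · apply Subtype.ext
      show ((0, r) : R × R) * (r, 0) = 0
      simp [Prod.ext_iff]
  set vA : {x : ↥(amalg R I) // x ≠ 0 ∧ x ∈ zdSet ↥(amalg R I)} := ⟨A, hAne, hAzd⟩
  set vB : {x : ↥(amalg R I) // x ≠ 0 ∧ x ∈ zdSet ↥(amalg R I)} := ⟨B, hBne, hBzd⟩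
  have hvne : vA ≠ vB := by
    intro h
    apply hy
    have := congrArg (fun x : {x : ↥(amalg R I) // x ≠ 0 ∧ x ∈ zdSet ↥(amalg R I)} =>
      ((x : ↥(amalg R I)) : R × R).1) h
    simpa [hA, hB] using this
  have hnadj : ¬ (zdGraph ↥(amalg R I)).Adj vA vB := by
    rintro ⟨-, habs⟩
    have : ((y, y) : R × R) * (0, r) = 0 := congrArg Subtype.val habs
    rw [Prod.ext_iff] at this
    have hyr : y * r = 0 := by simpa using this.2
    exact hy (hreg y (by rwa [mul_comm]))
  -- distance reasoning
  have hedist : (zdGraph ↥(amalg R I)).edist vA vB = 2 := by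
    have h1 : (zdGraph ↥(amalg R I)).edist vA vB ≤ 2 := by
      rw [← hdiam]; exact SimpleGraph.edist_le_ediam
    have h0 : (zdGraph ↥(amalg R I)).edist vA vB ≠ 0 :=
      SimpleGraph.edist_eq_zero_iff.ne.mpr hvne
    have hne1 : (zdGraph ↥(amalg R I)).edist vA vB ≠ 1 := fun h =>
      hnadj (SimpleGraph.edist_eq_one_iff_adj.mp h)
    have hnetop : (zdGraph ↥(amalg R I)).edist vA vB ≠ ⊤ := by
      intro h; rw [h] at h1; exact absurd h1 (by simp)
    lift (zdGraph ↥(amalg R I)).edist vA vB to ℕ using hnetop with n hn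
    have h1' : n ≤ 2 := by exact_mod_cast h1
    have h0' : n ≠ 0 := by exact_mod_cast h0
    have hne1' : n ≠ 1 := by exact_mod_cast hne1
    have : n = 2 := by omega
    exact_mod_cast this
  have hedist2 : (zdGraph ↥(amalg R I)).edist vA vB = (2 : ℕ) := by exact_mod_cast hedist
  obtain ⟨p, hp⟩ := SimpleGraph.exists_walk_of_edist_eq_coe hedist2
  -- extract the middle vertex
  set c := p.getVert 1 with hc
  have hadj1 : (zdGraph ↥(amalg R I)).Adj vA c := by
    have := p.adj_getVert_succ (i := 0) (by omega)
    rwa [p.getVert_zero] at this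
  have hadj2 : (zdGraph ↥(amalg R I)).Adj c vB := by
    have := p.adj_getVert_succ (i := 1) (by omega)
    rw [show (1 : ℕ) + 1 = p.length by omega, p.getVert_length] at this
    exact this
  obtain ⟨-, hac⟩ := hadj1
  obtain ⟨-, hcb⟩ := hadj2
  set cu : R := (((c : ↥(amalg R I)) : R × R)).1 with hcu
  set cw : R := (((c : ↥(amalg R I)) : R × R)).2 with hcw
  have hcmem : cw - cu ∈ I := (c : ↥(amalg R I)).2
  have hac' : ((y, y) : R × R) * ((c : ↥(amalg R I)) : R × R) = 0 :=
    congrArg Subtype.val hac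
  have hcb' : (((c : ↥(amalg R I)) : R × R)) * (0, r) = 0 :=
    congrArg Subtype.val hcb
  rw [Prod.ext_iff] at hac' hcb'
  have hycu : y * cu = 0 := by simpa using hac'.1
  have hcwr : cw * r = 0 := by simpa using hcb'.2
  have hcw0 : cw = 0 := hreg cw (by rwa [mul_comm])
  have hcuI : cu ∈ I := by
    have := I.neg_mem hcmem
    simpa [hcw0] using this
  have hcu0 : cu ≠ 0 := by
    intro h0
    apply c.2.1
    apply Subtype.ext
    show (((c : ↥(amalg R I)) : R × R)) = 0
    rw [Prod.ext_iff, ← hcu, ← hcw]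
    exact ⟨h0, hcw0⟩
  exact ⟨cu, hcuI, hcu0, by rwa [mul_comm]⟩
end
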